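/- arXiv:1810.07295 — 9 statements merged into one kernel-verified Lean document; each statement's English description precedes it below -/
import Mathlib

section
/- Fix ε > 0 and let U₁ = {(x,y) ∈ ℝ² : x² + 4y² < ε²} and N₁ = ℝ × U₁ ⊆ ℝ³. Consider the vector field X̄(t,x,y) = (1, 4y, −x) on N₁, and let ~ be the leaf equivalence relation on N₁ determined by X̄. Then the quotient topological space N₁/~ is Hausdorff. -/
/-!
Write `z = x + 2iy`. The flow of `X̄` is `(t, z) ↦ (t + τ, z e^{-2iτ})`, which preserves
`|z|² = x² + 4y²` and hence `N₁`; so `z e^{2it}` is a continuous first integral of `X̄`.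
Conversely, two points with the same value of this invariant lie on one integral curve (flow
for the time difference of their `t`-coordinates). The leaf space therefore injects
continuously into `ℂ`, and is Hausdorff.
-/

open Set

/-- One step of Palais' leaf relation: `p` and `q` are joined by a differentiable path in
`N` whose velocity at each time lies in the `ℝ`-linear span of the values of the given
vector fields.  The leaf equivalence relation is the smallest equivalence relation
containing this relation, and the leaf space is the corresponding quotient `Quot` with the
quotient topology. -/
def LeafStepR {E : Type*} [NormedAddCommGroup E] [NormedSpace ℝ E]
    (N : Set E) (Vs : Set (E → E)) (p q : ↥N) : Prop :=
  ∃ γ : ℝ → E, (∀ k ∈ Icc (0:ℝ) 1, γ k ∈ N) ∧ γ 0 = (p : E) ∧ γ 1 = (q : E) ∧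
    ∀ k ∈ Icc (0:ℝ) 1, ∃ d ∈ Submodule.span ℝ ((fun V => V (γ k)) '' Vs),
      HasDerivWithinAt γ d (Icc (0:ℝ) 1) k

theorem Quot.t2Space_of_complete_invariant {X Y : Type*} [TopologicalSpace X]
    [TopologicalSpace Y] [T2Space Y] {r : X → X → Prop} {f : X → Y} (hf : Continuous f)
    (hr : ∀ p q, r p q → f p = f q) (hsep : ∀ p q, f p = f q → Relation.EqvGen r p q) :
    T2Space (Quot r) := by
  refine T2Space.of_injective_continuous (f := Quot.lift f hr) ?_ (continuous_quot_lift _ hf)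
  rintro ⟨p⟩ ⟨q⟩ h
  exact Quot.eqvGen_sound (hsep p q h)

section LeafStep

variable {E G : Type*} [NormedAddCommGroup E] [NormedSpace ℝ E]
  [NormedAddCommGroup G] [NormedSpace ℝ G] {N : Set E} {Vs : Set (E → E)}

theorem LeafStepR.apply_eq_of_fderiv_apply_eq_zero {F : E → G}
    (hF : ∀ p ∈ N, DifferentiableAt ℝ F p) (hV : ∀ p ∈ N, ∀ V ∈ Vs, fderiv ℝ F p (V p) = 0)
    {p q : N} (h : LeafStepR N Vs p q) : F p = F q := by
  obtain ⟨γ, hγN, hγ0, hγ1, hγ⟩ := h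
  have hderiv : ∀ k ∈ Icc (0 : ℝ) 1, HasDerivWithinAt (F ∘ γ) 0 (Icc 0 1) k := by
    intro k hk
    obtain ⟨d, hd, hγd⟩ := hγ k hk
    have hspan : Submodule.span ℝ ((fun V => V (γ k)) '' Vs) ≤ LinearMap.ker (fderiv ℝ F (γ k)) :=
      Submodule.span_le.mpr <| by
        rintro _ ⟨V, hV', rfl⟩
        exact hV _ (hγN k hk) V hV'
    have hd0 : fderiv ℝ F (γ k) d = 0 := hspan hd
    simpa [hd0] using (hF _ (hγN k hk)).hasFDerivAt.comp_hasDerivWithinAt k hγd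
  have := (convex_Icc (0 : ℝ) 1).norm_image_sub_le_of_norm_hasDerivWithin_le (C := 0)
    hderiv (fun _ _ => norm_zero.le) (left_mem_Icc.2 zero_le_one) (right_mem_Icc.2 zero_le_one)
  rw [← hγ0, ← hγ1]
  simp only [zero_mul, norm_le_zero_iff, sub_eq_zero] at this
  exact this.symm

theorem LeafStepR.of_hasDerivAt {V : E → E} (hV : V ∈ Vs) {c : ℝ → E}
    (hc : ∀ τ, HasDerivAt c (V (c τ)) τ) (hcN : ∀ τ, c τ ∈ N) {p q : N} {s : ℝ}
    (hp : c 0 = p) (hq : c s = q) : LeafStepR N Vs p q := by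
  refine ⟨fun k => c (k * s), fun k _ => hcN _, by simpa using hp, by simpa using hq,
    fun k _ => ⟨s • V (c (k * s)), ?_, ?_⟩⟩
  · exact Submodule.smul_mem _ _ (Submodule.subset_span ⟨V, hV, rfl⟩)
  · simpa [Function.comp_def] using
      ((hc (k * s)).scomp k ((hasDerivAt_id k).mul_const s)).hasDerivWithinAt

end LeafStep

open Complex ContinuousLinearMap

def ellipticCylinder (ε : ℝ) : Set (ℝ × ℝ × ℝ) := {p | p.2.1 ^ 2 + 4 * p.2.2 ^ 2 < ε ^ 2}

def ellipticField (p : ℝ × ℝ × ℝ) : ℝ × ℝ × ℝ := (1, 4 * p.2.2, -p.2.1)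

noncomputable def leafInvariant (p : ℝ × ℝ × ℝ) : ℂ :=
  (p.2.1 + 2 * p.2.2 * I) * exp (2 * p.1 * I)

noncomputable def ellipticFlow (s : ℝ) (p : ℝ × ℝ × ℝ) : ℝ × ℝ × ℝ :=
  (p.1 + s, p.2.1 * Real.cos (2 * s) + 2 * p.2.2 * Real.sin (2 * s),
    p.2.2 * Real.cos (2 * s) - p.2.1 / 2 * Real.sin (2 * s))

theorem ellipticFlow_zero (p : ℝ × ℝ × ℝ) : ellipticFlow 0 p = p := by
  simp [ellipticFlow]

theorem differentiable_leafInvariant : Differentiable ℝ leafInvariant := by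
  unfold leafInvariant
  fun_prop

theorem fderiv_leafInvariant_ellipticField (p : ℝ × ℝ × ℝ) :
    fderiv ℝ leafInvariant p (ellipticField p) = 0 := by
  have ht : HasFDerivAt (fun p : ℝ × ℝ × ℝ => (p.1 : ℂ)) (ofRealCLM.comp (fst ℝ ℝ (ℝ × ℝ))) p :=
    (ofRealCLM.comp (fst ℝ ℝ (ℝ × ℝ))).hasFDerivAt
  have hx : HasFDerivAt (fun p : ℝ × ℝ × ℝ => (p.2.1 : ℂ))
      (ofRealCLM.comp ((fst ℝ ℝ ℝ).comp (snd ℝ ℝ (ℝ × ℝ)))) p :=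
    (ofRealCLM.comp ((fst ℝ ℝ ℝ).comp (snd ℝ ℝ (ℝ × ℝ)))).hasFDerivAt
  have hy : HasFDerivAt (fun p : ℝ × ℝ × ℝ => (p.2.2 : ℂ))
      (ofRealCLM.comp ((snd ℝ ℝ ℝ).comp (snd ℝ ℝ (ℝ × ℝ)))) p :=
    (ofRealCLM.comp ((snd ℝ ℝ ℝ).comp (snd ℝ ℝ (ℝ × ℝ)))).hasFDerivAt
  have h := (hx.fun_add ((hy.const_mul 2).mul_const I)).fun_mul ((ht.const_mul 2).mul_const I).cexp
  unfold leafInvariant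
  rw [h.fderiv]
  simp only [smul_add, ellipticField, add_apply, smul_apply, comp_apply, coe_fst', coe_snd',
    ofRealCLM_apply, ofReal_one, smul_eq_mul, mul_one, ofReal_mul, ofReal_ofNat, ofReal_neg,
    mul_neg]
  linear_combination (4 * p.2.2 * exp (2 * p.1 * I)) * I_sq

theorem ellipticFlow_mem_ellipticCylinder {ε : ℝ} {p : ℝ × ℝ × ℝ} (hp : p ∈ ellipticCylinder ε)
    (s : ℝ) : ellipticFlow s p ∈ ellipticCylinder ε := by
  obtain ⟨t, x, y⟩ := p
  have hnorm : (x * Real.cos (2 * s) + 2 * y * Real.sin (2 * s)) ^ 2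
      + 4 * (y * Real.cos (2 * s) - x / 2 * Real.sin (2 * s)) ^ 2 = x ^ 2 + 4 * y ^ 2 := by
    linear_combination (x ^ 2 + 4 * y ^ 2) * Real.sin_sq_add_cos_sq (2 * s)
  simpa [ellipticCylinder, ellipticFlow, hnorm] using hp

theorem hasDerivAt_ellipticFlow (p : ℝ × ℝ × ℝ) (s : ℝ) :
    HasDerivAt (ellipticFlow · p) (ellipticField (ellipticFlow s p)) s := by
  obtain ⟨t, x, y⟩ := p
  have hθ : HasDerivAt (fun τ : ℝ => 2 * τ) 2 s := by simpa using (hasDerivAt_id s).const_mul 2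
  have ht : HasDerivAt (fun τ : ℝ => t + τ) 1 s := (hasDerivAt_id s).const_add t
  have hx := (hθ.cos.const_mul x).add (hθ.sin.const_mul (2 * y))
  have hy := (hθ.cos.const_mul y).sub (hθ.sin.const_mul (x / 2))
  refine (ht.prodMk (hx.prodMk hy)).congr_deriv ?_
  simp only [ellipticField, ellipticFlow, Prod.mk.injEq]
  refine ⟨trivial, by ring, by ring⟩

theorem ellipticFlow_eq_of_leafInvariant_eq {p q : ℝ × ℝ × ℝ}
    (h : leafInvariant p = leafInvariant q) : ellipticFlow (q.1 - p.1) p = q := by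
  obtain ⟨t, x, y⟩ := p
  obtain ⟨t', x', y'⟩ := q
  set s := t' - t
  have hrot : (x' : ℂ) + 2 * y' * I = (x + 2 * y * I) * exp ((-(2 * s) : ℝ) * I) := by
    rw [show ((-(2 * s) : ℝ) : ℂ) * I = 2 * t * I - 2 * t' * I by push_cast [s]; ring, exp_sub,
      ← mul_div_assoc, eq_div_iff (exp_ne_zero _)]
    exact h.symm
  rw [exp_mul_I, ← ofReal_cos, ← ofReal_sin, Real.cos_neg, Real.sin_neg] at hrot
  have hre := congrArg re hrot
  have him := congrArg im hrot
  simp only [add_re, add_im, mul_re, mul_im, ofReal_re, ofReal_im, I_re, I_im, re_ofNat,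
    im_ofNat] at hre him
  simp only [ellipticFlow, Prod.mk.injEq]
  refine ⟨by ring, by linarith, by linarith⟩

theorem leaf_space_elliptic_disc_hausdorff_general (ε : ℝ) :
    T2Space (Quot (LeafStepR
      {p : ℝ × ℝ × ℝ | p.2.1 ^ 2 + 4 * p.2.2 ^ 2 < ε ^ 2}
      {fun p : ℝ × ℝ × ℝ => ((1 : ℝ), 4 * p.2.2, -p.2.1)})) := by
  change T2Space (Quot (LeafStepR (ellipticCylinder ε) {ellipticField}))
  have hfirst : ∀ p ∈ ellipticCylinder ε, ∀ V ∈ ({ellipticField} : Set _),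
      fderiv ℝ leafInvariant p (V p) = 0 := by
    rintro p - V rfl
    exact fderiv_leafInvariant_ellipticField p
  refine Quot.t2Space_of_complete_invariant (f := fun p => leafInvariant p)
    (differentiable_leafInvariant.continuous.comp continuous_subtype_val)
    (fun _ _ h => h.apply_eq_of_fderiv_apply_eq_zero
      (fun p _ => differentiable_leafInvariant p) hfirst)
    (fun p _ h => .rel _ _ ?_)
  exact LeafStepR.of_hasDerivAt (mem_singleton _) (hasDerivAt_ellipticFlow p)
    (ellipticFlow_mem_ellipticCylinder p.2) (ellipticFlow_zero p)
    (ellipticFlow_eq_of_leafInvariant_eq h)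

/-- **Proposition 2.8, first half.**
The Palais leaf space of the vector field `X̄ = ∂/∂t + 4y ∂/∂x − x ∂/∂y` on
`N₁ = ℝ × U₁`, where `U₁` is the elliptical disc `{x² + 4y² < ε²}`, is Hausdorff. -/
theorem leaf_space_elliptic_disc_hausdorff (ε : ℝ) (hε : 0 < ε) :
    T2Space (Quot (LeafStepR
      {p : ℝ × ℝ × ℝ | p.2.1 ^ 2 + 4 * p.2.2 ^ 2 < ε ^ 2}
      {fun p : ℝ × ℝ × ℝ => ((1 : ℝ), 4 * p.2.2, -p.2.1)})) :=
  leaf_space_elliptic_disc_hausdorff_general ε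
end

section
/- Fix ε > 0 and let U₂ = {(x,y) ∈ ℝ² : x² + y² < ε²} and N₂ = ℝ × U₂ ⊆ ℝ³. Consider the vector field X̄(t,x,y) = (1, 4y, −x) on N₂, and let ~ be the leaf equivalence relation on N₂ determined by X̄. Then the quotient topological space N₂/~ is not Hausdorff. -/
open Set

/-!
The field `X̄` preserves the energy `x² + 4y²`, so every leaf lies over an ellipse. The ellipse
`x² + 4y² = ε²` touches the boundary circle of the disc exactly at `y = 0, x = ±ε`, which are
not in `N₂`; along a leaf over this ellipse `y` never vanishes and keeps its sign, so
`(0, 0, ε/2)` and `(π/2, 0, -ε/2)` lie in different leaves. For `2|c| < ε` the helix through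
`(0, 0, c)` stays inside `N₂` and reaches `(π/2, 0, -c)`; letting `c → ε/2` exhibits the two
distinct classes as a limit of pairs of equal classes, impossible in a Hausdorff quotient,
whose diagonal is closed.
-/

open Filter Topology Real

theorem Quot.mk_eq_mk_of_mem_closure {X : Type*} [TopologicalSpace X] {r : X → X → Prop}
    [T2Space (Quot r)] {a b : X} (h : (a, b) ∈ closure {p : X × X | r p.1 p.2}) :
    Quot.mk r a = Quot.mk r b :=
  isClosed_diagonal.closure_subset <|
    map_mem_closure (continuous_quot_mk.prodMap continuous_quot_mk) h fun _ hp => Quot.sound hp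

theorem IsPreconnected.pos_iff_pos_of_ne_zero {X α : Type*} [TopologicalSpace X]
    [LinearOrder α] [TopologicalSpace α] [OrderClosedTopology α] [Zero α]
    {s : Set X} (hs : IsPreconnected s) {f : X → α} (hf : ContinuousOn f s)
    (hf₀ : ∀ x ∈ s, f x ≠ 0) {a b : X} (ha : a ∈ s) (hb : b ∈ s) : 0 < f a ↔ 0 < f b := by
  suffices key : ∀ a ∈ s, ∀ b ∈ s, 0 < f a → 0 < f b from ⟨key a ha b hb, key b hb a ha⟩
  intro a ha b hb hfa
  by_contra! hfb
  obtain ⟨x, hx, hx₀⟩ := hs.intermediate_value hb ha hf ⟨hfb, hfa.le⟩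
  exact hf₀ x hx hx₀

section ProdDeriv

variable {𝕜 E F : Type*} [NontriviallyNormedField 𝕜] [NormedAddCommGroup E] [NormedSpace 𝕜 E]
  [NormedAddCommGroup F] [NormedSpace 𝕜 F] {f : 𝕜 → E × F} {f' : E × F} {s : Set 𝕜} {x : 𝕜}

theorem HasDerivWithinAt.fst (h : HasDerivWithinAt f f' s x) :
    HasDerivWithinAt (fun x => (f x).1) f'.1 s x :=
  (hasFDerivAt_fst (p := f x)).comp_hasDerivWithinAt x h

theorem HasDerivWithinAt.snd (h : HasDerivWithinAt f f' s x) :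
    HasDerivWithinAt (fun x => (f x).2) f'.2 s x :=
  (hasFDerivAt_snd (p := f x)).comp_hasDerivWithinAt x h

end ProdDeriv

namespace PalaisRoundDisc

def cylinder (ε : ℝ) : Set (ℝ × ℝ × ℝ) := {p | p.2.1 ^ 2 + p.2.2 ^ 2 < ε ^ 2}

def palaisField (p : ℝ × ℝ × ℝ) : ℝ × ℝ × ℝ := (1, 4 * p.2.2, -p.2.1)

def energy (p : ℝ × ℝ × ℝ) : ℝ := p.2.1 ^ 2 + 4 * p.2.2 ^ 2

def upperHalfEllipse (ε : ℝ) : Set (ℝ × ℝ × ℝ) := {p | energy p = ε ^ 2 ∧ 0 < p.2.2}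

noncomputable def helix (c k : ℝ) : ℝ × ℝ × ℝ := (k * (π / 2), 2 * c * sin (π * k), c * cos (π * k))

variable {ε c : ℝ}

theorem hasDerivWithinAt_energy_comp {γ : ℝ → ℝ × ℝ × ℝ} {d : ℝ × ℝ × ℝ} {s : Set ℝ} {k : ℝ}
    (hγ : HasDerivWithinAt γ d s k) (hd : d ∈ Submodule.span ℝ {palaisField (γ k)}) :
    HasDerivWithinAt (energy ∘ γ) 0 s k := by
  obtain ⟨a, rfl⟩ := Submodule.mem_span_singleton.mp hd
  refine ((hγ.snd.fst.pow 2).add ((hγ.snd.snd.pow 2).const_mul 4)).congr_deriv ?_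
  simp only [palaisField, Prod.smul_mk, smul_eq_mul]
  push_cast
  ring

theorem energy_comp_eq_of_tangent {γ : ℝ → ℝ × ℝ × ℝ}
    (hγ : ∀ k ∈ Icc (0 : ℝ) 1, ∃ d ∈ Submodule.span ℝ ((fun V => V (γ k)) '' {palaisField}),
      HasDerivWithinAt γ d (Icc 0 1) k) :
    ∀ k ∈ Icc (0 : ℝ) 1, energy (γ k) = energy (γ 0) := by
  have hE : ∀ k ∈ Icc (0 : ℝ) 1, HasDerivWithinAt (energy ∘ γ) 0 (Icc 0 1) k := fun k hk => by
    obtain ⟨d, hd, hγd⟩ := hγ k hk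
    exact hasDerivWithinAt_energy_comp hγd (by rwa [image_singleton] at hd)
  refine constant_of_has_deriv_right_zero (fun k hk => (hE k hk).continuousWithinAt) fun k hk => ?_
  exact (hE k (Ico_subset_Icc_self hk)).mono_of_mem_nhdsWithin (Icc_mem_nhdsGE_of_mem hk)

theorem ne_zero_of_mem_cylinder_of_energy_eq {p : ℝ × ℝ × ℝ} (hp : p ∈ cylinder ε)
    (hE : energy p = ε ^ 2) : p.2.2 ≠ 0 := by
  intro hy
  simp only [cylinder, energy, hy, mem_ofPred_eq] at hp hE
  linarith

theorem mem_upperHalfEllipse_iff_of_leafStepR {p q : cylinder ε}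
    (h : LeafStepR (cylinder ε) {palaisField} p q) :
    (p : ℝ × ℝ × ℝ) ∈ upperHalfEllipse ε ↔ (q : ℝ × ℝ × ℝ) ∈ upperHalfEllipse ε := by
  obtain ⟨γ, hγN, hγ₀, hγ₁, hγ⟩ := h
  have hE := energy_comp_eq_of_tangent hγ
  rw [← hγ₀, ← hγ₁]
  by_cases hp : energy (γ 0) = ε ^ 2
  · have hy : ContinuousOn (fun k => (γ k).2.2) (Icc 0 1) := fun k hk =>
      let ⟨_, _, hγd⟩ := hγ k hk
      hγd.snd.snd.continuousWithinAt
    have hy₀ : ∀ k ∈ Icc (0 : ℝ) 1, (γ k).2.2 ≠ 0 := fun k hk =>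
      ne_zero_of_mem_cylinder_of_energy_eq (hγN k hk) ((hE k hk).trans hp)
    simp only [upperHalfEllipse, mem_ofPred_eq, hp, hE 1 (by simp), true_and]
    exact isPreconnected_Icc.pos_iff_pos_of_ne_zero hy hy₀ (by simp) (by simp)
  · simp [upperHalfEllipse, hp, hE 1 (by simp)]

theorem mem_upperHalfEllipse_iff_of_mk_eq {p q : cylinder ε}
    (h : Quot.mk (LeafStepR (cylinder ε) {palaisField}) p = Quot.mk _ q) :
    (p : ℝ × ℝ × ℝ) ∈ upperHalfEllipse ε ↔ (q : ℝ × ℝ × ℝ) ∈ upperHalfEllipse ε :=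
  (congrArg (Quot.lift (fun p : cylinder ε => (p : ℝ × ℝ × ℝ) ∈ upperHalfEllipse ε)
    fun _ _ h => propext (mem_upperHalfEllipse_iff_of_leafStepR h)) h).to_iff

@[simp] theorem helix_zero : helix c 0 = (0, 0, c) := by simp [helix]

@[simp] theorem helix_one : helix c 1 = (π / 2, 0, -c) := by simp [helix]

theorem continuous_helix (k : ℝ) : Continuous fun c => helix c k := by
  unfold helix; fun_prop

theorem hasDerivAt_helix (c k : ℝ) :
    HasDerivAt (helix c) ((π / 2) • palaisField (helix c k)) k := by
  have hθ : HasDerivAt (fun k => π * k) π k := by simpa using (hasDerivAt_id k).const_mul π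
  refine ((hasDerivAt_mul_const (π / 2)).prodMk ((((hasDerivAt_sin _).comp k hθ).const_mul
    (2 * c)).prodMk (((hasDerivAt_cos _).comp k hθ).const_mul c))).congr_deriv ?_
  simp only [palaisField, helix, Prod.smul_mk, smul_eq_mul, Prod.mk.injEq]
  refine ⟨by ring, by ring, by ring⟩

theorem helix_mem_cylinder (hc : (2 * c) ^ 2 < ε ^ 2) (k : ℝ) : helix c k ∈ cylinder ε := by
  simp only [helix, cylinder, mem_ofPred_eq]
  nlinarith [sin_sq_add_cos_sq (π * k), sq_nonneg (c * sin (π * k))]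

theorem leafStepR_helix (hc : (2 * c) ^ 2 < ε ^ 2) :
    LeafStepR (cylinder ε) {palaisField}
      ⟨helix c 0, helix_mem_cylinder hc 0⟩ ⟨helix c 1, helix_mem_cylinder hc 1⟩ :=
  ⟨helix c, fun k _ => helix_mem_cylinder hc k, rfl, rfl, fun k _ =>
    ⟨_, Submodule.smul_mem _ _ (Submodule.subset_span (mem_image_of_mem _ rfl)),
      (hasDerivAt_helix c k).hasDerivWithinAt⟩⟩

theorem mk_helix_mem_closure_leafStepR (hc : (2 * c) ^ 2 ≤ ε ^ 2)
    (h₀ : helix c 0 ∈ cylinder ε) (h₁ : helix c 1 ∈ cylinder ε) :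
    ((⟨helix c 0, h₀⟩, ⟨helix c 1, h₁⟩) : cylinder ε × cylinder ε) ∈
      closure {p | LeafStepR (cylinder ε) {palaisField} p.1 p.2} := by
  have hε : 0 < ε ^ 2 := by
    simp only [helix_zero, cylinder, mem_ofPred_eq] at h₀
    nlinarith
  set t : ℕ → ℝ := fun n => n / (n + 1)
  have ht : ∀ n, (2 * (t n * c)) ^ 2 < ε ^ 2 := fun n => by
    have ht₀ : 0 ≤ t n := by positivity
    have ht₁ : t n < 1 := (div_lt_one (by positivity)).mpr (by linarith)
    calc (2 * (t n * c)) ^ 2 = t n ^ 2 * (2 * c) ^ 2 := by ring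
      _ ≤ t n ^ 2 * ε ^ 2 := by gcongr
      _ < ε ^ 2 := mul_lt_of_lt_one_left hε (pow_lt_one₀ ht₀ ht₁ two_ne_zero)
  have htc : Tendsto (fun n => t n * c) atTop (𝓝 c) := by
    simpa using (tendsto_natCast_div_add_atTop (1 : ℝ)).mul_const c
  refine mem_closure_of_tendsto (b := atTop)
    ((tendsto_subtype_rng.mpr (((continuous_helix 0).tendsto c).comp htc)).prodMk_nhds
      (tendsto_subtype_rng.mpr (((continuous_helix 1).tendsto c).comp htc)))
    (Eventually.of_forall fun n => leafStepR_helix (ht n))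

end PalaisRoundDisc

open PalaisRoundDisc

/-- **Proposition 2.8, second half.**
The Palais leaf space of the vector field `X̄ = ∂/∂t + 4y ∂/∂x − x ∂/∂y` on
`N₂ = ℝ × U₂`, where `U₂` is the round disc `{x² + y² < ε²}`, is not Hausdorff. -/
theorem leaf_space_round_disc_not_hausdorff (ε : ℝ) (hε : 0 < ε) :
    ¬ T2Space (Quot (LeafStepR
      {p : ℝ × ℝ × ℝ | p.2.1 ^ 2 + p.2.2 ^ 2 < ε ^ 2}
      {fun p : ℝ × ℝ × ℝ => ((1 : ℝ), 4 * p.2.2, -p.2.1)})) := by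
  change ¬ T2Space (Quot (LeafStepR (cylinder ε) {palaisField}))
  intro
  have hc : (ε / 2) ^ 2 < ε ^ 2 := by nlinarith
  have h₀ : helix (ε / 2) 0 ∈ cylinder ε := by simpa [cylinder] using hc
  have h₁ : helix (ε / 2) 1 ∈ cylinder ε := by simpa [cylinder] using hc
  have hleaf := mem_upperHalfEllipse_iff_of_mk_eq
    (Quot.mk_eq_mk_of_mem_closure (mk_helix_mem_closure_leafStepR (le_of_eq (by ring)) h₀ h₁))
  have hup : helix (ε / 2) 0 ∈ upperHalfEllipse ε := by
    simp only [upperHalfEllipse, energy, helix_zero]; constructor <;> [ring; positivity]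
  exact (hleaf.mp hup).2.not_ge (by simp only [helix_one]; linarith)
end

section
/- Let a, b, m, n be positive integers, let D ⊆ ℂ be open, let g be holomorphic on D and f holomorphic on D \ {0}. On the open set Ω = {(x,y) ∈ ℂ² : x·y ≠ 0 and x^n·y^m ∈ D \ {0}}, define the holomorphic vector fields X(x,y) = x^a·y^b·(m·x, −n·y) and Y(x,y) = g(x^n·y^m)·( x·(−b·m + x^a·y^b·f(x^n·y^m)), y·(a·m − (n/m)·x^a·y^b·f(x^n·y^m)) ). Then the Lie bracket of X and Y vanishes identically on Ω, i.e. DY(p)(X(p)) − DX(p)(Y(p)) = 0 for every p ∈ Ω. -/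
/-!
Write `u = xᵃyᵇ`, `w = xⁿyᵐ`, `E = (m x, -n y)` and `A = (-b x, a y)`. Then `X = u • E` and
`Y = m g(w) • A + (g(w) f(w) / m) • X`. The diagonal linear fields `E` and `A` commute, `E`
annihilates `w` and `A` annihilates `u`. Hence `X` annihilates every function of `w`, and
`[X, A] = -A(u) • E + u • [E, A] = 0`; the Leibniz rule for `[X, φ • V]` then kills both summands
of `[X, Y]`.
-/

open VectorField

theorem natCast_mul_pow_sub_one_mul {R : Type*} [Semiring R] (k : ℕ) (x : R) :
    (k : R) * x ^ (k - 1) * x = k * x ^ k := by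
  rcases k with _ | k
  · simp
  · rw [mul_assoc, pow_sub_one_mul k.succ_ne_zero]

section

variable {𝕜 : Type*} [NontriviallyNormedField 𝕜]

def diagField (α β : 𝕜) (q : 𝕜 × 𝕜) : 𝕜 × 𝕜 := (α * q.1, β * q.2)

def monomial₂ (k l : ℕ) (q : 𝕜 × 𝕜) : 𝕜 := q.1 ^ k * q.2 ^ l

theorem hasFDerivAt_diagField (α β : 𝕜) (p : 𝕜 × 𝕜) :
    HasFDerivAt (diagField α β)
      ((α • ContinuousLinearMap.fst 𝕜 𝕜 𝕜).prod (β • ContinuousLinearMap.snd 𝕜 𝕜 𝕜)) p :=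
  ((α • ContinuousLinearMap.fst 𝕜 𝕜 𝕜).prod (β • ContinuousLinearMap.snd 𝕜 𝕜 𝕜)).hasFDerivAt

theorem differentiableAt_diagField (α β : 𝕜) (p : 𝕜 × 𝕜) :
    DifferentiableAt 𝕜 (diagField α β) p :=
  (hasFDerivAt_diagField α β p).differentiableAt

theorem fderiv_diagField_apply (α β : 𝕜) (p v : 𝕜 × 𝕜) :
    fderiv 𝕜 (diagField α β) p v = diagField α β v := by
  simp [(hasFDerivAt_diagField α β p).fderiv, diagField]

theorem lieBracket_diagField (α β γ δ : 𝕜) (p : 𝕜 × 𝕜) :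
    lieBracket 𝕜 (diagField α β) (diagField γ δ) p = 0 := by
  simp only [lieBracket, fderiv_diagField_apply, diagField, Prod.mk_sub_mk, Prod.mk_eq_zero]
  constructor <;> ring

theorem differentiableAt_monomial₂ (k l : ℕ) (p : 𝕜 × 𝕜) :
    DifferentiableAt 𝕜 (monomial₂ k l) p := by
  unfold monomial₂
  fun_prop

theorem fderiv_monomial₂_apply_diagField (k l : ℕ) (α β : 𝕜) (p : 𝕜 × 𝕜) :
    fderiv 𝕜 (monomial₂ k l) p (diagField α β p) = (k * α + l * β) * monomial₂ k l p := by
  have h : HasFDerivAt (monomial₂ k l) _ p :=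
    ((hasFDerivAt_fst (𝕜 := 𝕜)).pow k).mul ((hasFDerivAt_snd (𝕜 := 𝕜)).pow l)
  rw [h.fderiv]
  simp only [add_apply, smul_apply, ContinuousLinearMap.coe_fst',
    ContinuousLinearMap.coe_snd', nsmul_eq_mul, smul_eq_mul, diagField, monomial₂]
  linear_combination (α * p.2 ^ l) * natCast_mul_pow_sub_one_mul k p.1 +
    (β * p.1 ^ k) * natCast_mul_pow_sub_one_mul l p.2

theorem fderiv_comp_apply_eq_zero {E : Type*} [NormedAddCommGroup E] [NormedSpace 𝕜 E]
    {h : 𝕜 → 𝕜} {w : E → 𝕜} {p v : E} (hh : DifferentiableAt 𝕜 h (w p))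
    (hw : DifferentiableAt 𝕜 w p) (hv : fderiv 𝕜 w p v = 0) :
    fderiv 𝕜 (fun q ↦ h (w q)) p v = 0 := by
  rw [← Function.comp_def, fderiv_comp p hh hw]
  simp [hv]

theorem lieBracket_smul_diagField_diagField {u : 𝕜 × 𝕜 → 𝕜} {α β γ δ : 𝕜} {p : 𝕜 × 𝕜}
    (hu : DifferentiableAt 𝕜 u p) (hu_γδ : fderiv 𝕜 u p (diagField γ δ p) = 0) :
    lieBracket 𝕜 (fun q ↦ u q • diagField α β q) (diagField γ δ) p = 0 := by
  rw [lieBracket_smul_left hu (differentiableAt_diagField α β p), hu_γδ, lieBracket_diagField]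
  simp

theorem lieBracket_smul_diagField_add_smul_eq_zero {u φ ψ : 𝕜 × 𝕜 → 𝕜} {α β γ δ : 𝕜}
    {p : 𝕜 × 𝕜} (hu : DifferentiableAt 𝕜 u p) (hφ : DifferentiableAt 𝕜 φ p)
    (hψ : DifferentiableAt 𝕜 ψ p) (hu_γδ : fderiv 𝕜 u p (diagField γ δ p) = 0)
    (hφ_αβ : fderiv 𝕜 φ p (u p • diagField α β p) = 0)
    (hψ_αβ : fderiv 𝕜 ψ p (u p • diagField α β p) = 0) :
    lieBracket 𝕜 (fun q ↦ u q • diagField α β q)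
      (fun q ↦ φ q • diagField γ δ q + ψ q • (u q • diagField α β q)) p = 0 := by
  have hA : DifferentiableAt 𝕜 (diagField γ δ) p := differentiableAt_diagField γ δ p
  have hV : DifferentiableAt 𝕜 (fun q ↦ u q • diagField α β q) p :=
    hu.fun_smul (differentiableAt_diagField α β p)
  rw [show (fun q ↦ φ q • diagField γ δ q + ψ q • (u q • diagField α β q)) =
      (fun q ↦ φ q • diagField γ δ q) + (fun q ↦ ψ q • (u q • diagField α β q)) from rfl,
    lieBracket_add_right (hφ.fun_smul hA) (hψ.fun_smul hV), lieBracket_smul_right hφ hA,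
    lieBracket_smul_right hψ hV, lieBracket_smul_diagField_diagField hu hu_γδ, hφ_αβ, hψ_αβ,
    lieBracket_self]
  simp

end

theorem commuting_pair_of_family_general
    (a b m n : ℕ) (hm : 0 < m)
    (D : Set ℂ) (hD : IsOpen D) (g f : ℂ → ℂ)
    (hg : DifferentiableOn ℂ g D) (hf : DifferentiableOn ℂ f (D \ {0}))
    (X Y : ℂ × ℂ → ℂ × ℂ)
    (hX : ∀ q : ℂ × ℂ, X q =
      (q.1 ^ a * q.2 ^ b * ((m : ℂ) * q.1), q.1 ^ a * q.2 ^ b * (-(n : ℂ) * q.2)))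
    (hY : ∀ q : ℂ × ℂ, Y q =
      (g (q.1 ^ n * q.2 ^ m) * (q.1 * (-((b : ℂ) * m) + q.1 ^ a * q.2 ^ b * f (q.1 ^ n * q.2 ^ m))),
       g (q.1 ^ n * q.2 ^ m) * (q.2 * ((a : ℂ) * m -
         ((n : ℂ) / (m : ℂ)) * (q.1 ^ a * q.2 ^ b * f (q.1 ^ n * q.2 ^ m)))))) :
    ∀ p ∈ {q : ℂ × ℂ | q.1 * q.2 ≠ 0 ∧ q.1 ^ n * q.2 ^ m ∈ D \ {0}},
      fderiv ℂ Y p (X p) - fderiv ℂ X p (Y p) = 0 := by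
  rintro p ⟨-, hpD⟩
  have hm' : (m : ℂ) ≠ 0 := Nat.cast_ne_zero.mpr hm.ne'
  set w : ℂ × ℂ → ℂ := monomial₂ n m
  have hX' : X = fun q ↦ monomial₂ a b q • diagField (m : ℂ) (-n) q := by
    funext q
    simp [hX, monomial₂, diagField]
  have hY' : Y = fun q ↦ (m * g (w q)) • diagField (-(b : ℂ)) a q +
      (g (w q) * f (w q) / m) • (monomial₂ a b q • diagField (m : ℂ) (-n) q) := by
    funext q
    simp only [hY, w, monomial₂, diagField, Prod.smul_mk, Prod.mk_add_mk, smul_eq_mul]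
    congr 1
    · field_simp
    · field_simp
      ring
  have hw : fderiv ℂ w p (monomial₂ a b p • diagField (m : ℂ) (-n) p) = 0 := by
    rw [map_smul, fderiv_monomial₂_apply_diagField]
    ring
  have hgw : DifferentiableAt ℂ g (w p) := hg.differentiableAt (hD.mem_nhds hpD.1)
  have hfw : DifferentiableAt ℂ f (w p) :=
    hf.differentiableAt ((hD.sdiff isClosed_singleton).mem_nhds hpD)
  have hwp : DifferentiableAt ℂ w p := differentiableAt_monomial₂ n m p
  show lieBracket ℂ X Y p = 0
  rw [hY', hX']
  refine lieBracket_smul_diagField_add_smul_eq_zero (differentiableAt_monomial₂ a b p)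
    (by fun_prop) (by fun_prop) ?_
    (fderiv_comp_apply_eq_zero (h := fun z ↦ m * g z) (hgw.const_mul _) hwp hw)
    (fderiv_comp_apply_eq_zero (h := fun z ↦ g z * f z / m) ((hgw.mul hfw).div_const _) hwp hw)
  rw [fderiv_monomial₂_apply_diagField]
  ring

/-- **Commutation of the family (1.1).**
Let `a, b, m, n` be positive integers, `D ⊆ ℂ` open, `g` holomorphic on `D` and `f`
holomorphic on `D \ {0}`.  On the open set
`Ω = {(x,y) : x·y ≠ 0 ∧ xⁿ·yᵐ ∈ D \ {0}}` define the holomorphic vector fields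
`X(x,y) = xᵃ·yᵇ·(m·x, −n·y)` and
`Y(x,y) = g(xⁿ·yᵐ)·( x·(−b·m + xᵃ·yᵇ·f(xⁿ·yᵐ)), y·(a·m − (n/m)·xᵃ·yᵇ·f(xⁿ·yᵐ)) )`.
Then the Lie bracket `[X,Y](p) = DY(p)(X(p)) − DX(p)(Y(p))` vanishes identically on `Ω`. -/
theorem commuting_pair_of_family
    (a b m n : ℕ) (ha : 0 < a) (hb : 0 < b) (hm : 0 < m) (hn : 0 < n)
    (D : Set ℂ) (hD : IsOpen D) (g f : ℂ → ℂ)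
    (hg : DifferentiableOn ℂ g D) (hf : DifferentiableOn ℂ f (D \ {0}))
    (X Y : ℂ × ℂ → ℂ × ℂ)
    (hX : ∀ q : ℂ × ℂ, X q =
      (q.1 ^ a * q.2 ^ b * ((m : ℂ) * q.1), q.1 ^ a * q.2 ^ b * (-(n : ℂ) * q.2)))
    (hY : ∀ q : ℂ × ℂ, Y q =
      (g (q.1 ^ n * q.2 ^ m) * (q.1 * (-((b : ℂ) * m) + q.1 ^ a * q.2 ^ b * f (q.1 ^ n * q.2 ^ m))),
       g (q.1 ^ n * q.2 ^ m) * (q.2 * ((a : ℂ) * m -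
         ((n : ℂ) / (m : ℂ)) * (q.1 ^ a * q.2 ^ b * f (q.1 ^ n * q.2 ^ m)))))) :
    ∀ p ∈ {q : ℂ × ℂ | q.1 * q.2 ≠ 0 ∧ q.1 ^ n * q.2 ^ m ∈ D \ {0}},
      fderiv ℂ Y p (X p) - fderiv ℂ X p (Y p) = 0 :=
  commuting_pair_of_family_general a b m n hm D hD g f hg hf X Y hX hY
end

section
/- Let m be a positive integer, let η ∈ {−1, 1}, and let A = {z ∈ ℂ : ρ < |z| < ρ'} be an annulus with ρ < 1 < ρ'. Let f be holomorphic on A and let g be holomorphic and nowhere vanishing on A. Set f₀ = (2πi)⁻¹ · ∮_{|z|=1} f(z)·z⁻¹ dz and g₀ = (2πi)⁻¹ · ∮_{|z|=1} (z·g(z))⁻¹ dz. Suppose t, s : [0,1] → ℂ are differentiable with t'(k) = −(2πi/m²)·f(e^{2πi·η·k}) and s'(k) = (2πi/m)·(g(e^{2πi·η·k}))⁻¹ for all k ∈ [0,1]. Then t(1) = t(0) − (2πi/m²)·f₀ and s(1) = s(0) + (2πi/m)·g₀. -/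
open Complex Real Set

/-!
Writing `e^{2πiηk} = circleMap 0 1 (2πηk)`, the fundamental theorem of calculus turns
`t(1) - t(0)` into the integral of the right-hand side over `k ∈ [0, 1]`. Since `η` is a nonzero
integer, the path winds `|η|` times around the unit circle (with orientation `sign η`), and
periodicity shows that the integral is the circle average of the right-hand side. The circle
average of `h` is `(2πi)⁻¹ ∮ h(z)/z dz`, which for `h = f` and `h = 1/g` gives `f₀` and `g₀`.
-/

theorem intervalIntegral.integral_eq_sub_of_hasDerivWithinAt_Icc {E : Type*}
    [NormedAddCommGroup E] [NormedSpace ℝ E] [CompleteSpace E] {u u' : ℝ → E} {a b : ℝ}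
    (hab : a ≤ b)
    (hu : ∀ x ∈ Icc a b, HasDerivWithinAt u (u' x) (Icc a b) x)
    (hu' : IntervalIntegrable u' MeasureTheory.volume a b) :
    ∫ x in a..b, u' x = u b - u a :=
  integral_eq_sub_of_hasDeriv_right_of_le hab (fun x hx => (hu x hx).continuousWithinAt)
    (fun x hx => ((hu x (Ioo_subset_Icc_self hx)).hasDerivAt
      (Icc_mem_nhds hx.1 hx.2)).hasDerivWithinAt) hu'

theorem Function.Periodic.intervalIntegral_comp_mul_int {E : Type*} [NormedAddCommGroup E]
    [NormedSpace ℝ E] {F : ℝ → E} {T : ℝ} (hF : Function.Periodic F T) (hFc : Continuous F)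
    (hT : T ≠ 0) {n : ℤ} (hn : n ≠ 0) :
    ∫ x in (0:ℝ)..1, F (T * n * x) = T⁻¹ • ∫ x in (0:ℝ)..T, F x := by
  have hn' : (n : ℝ) ≠ 0 := Int.cast_ne_zero.2 hn
  have hwind := hF.intervalIntegral_add_zsmul_eq n 0 (fun a b => hFc.intervalIntegrable a b)
  rw [zero_add, zero_add, zsmul_eq_mul, mul_comm] at hwind
  rw [intervalIntegral.integral_comp_mul_left F (mul_ne_zero hT hn'), mul_zero, mul_one, hwind,
    ← Int.cast_smul_eq_zsmul ℝ, smul_smul]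
  congr 1
  field_simp

theorem ContinuousOn.continuous_comp_circleMap {E : Type*} [TopologicalSpace E] {h : ℂ → E}
    {c : ℂ} {R : ℝ} (hh : ContinuousOn h (Metric.sphere c |R|)) :
    Continuous fun θ => h (circleMap c R θ) :=
  hh.comp_continuous (continuous_circleMap c R) (circleMap_mem_sphere' c R)

section CircleAverage

variable {E : Type*} [NormedAddCommGroup E] [NormedSpace ℝ E] {h : ℂ → E} {c : ℂ} {R : ℝ}

theorem integral_comp_circleMap_int_mul_eq_circleAverage
    (hh : ContinuousOn h (Metric.sphere c |R|)) {n : ℤ} (hn : n ≠ 0) :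
    ∫ k in (0:ℝ)..1, h (circleMap c R (2 * π * n * k)) = circleAverage h c R := by
  have hper : Function.Periodic (fun θ => h (circleMap c R θ)) (2 * π) := fun θ => by
    simp only [periodic_circleMap c R θ]
  exact hper.intervalIntegral_comp_mul_int hh.continuous_comp_circleMap two_pi_pos.ne' hn

theorem sub_eq_circleAverage_of_hasDerivWithinAt [CompleteSpace E]
    (hh : ContinuousOn h (Metric.sphere c |R|)) {n : ℤ} (hn : n ≠ 0) {u : ℝ → E}
    (hu : ∀ k ∈ Icc (0:ℝ) 1,
      HasDerivWithinAt u (h (circleMap c R (2 * π * n * k))) (Icc (0:ℝ) 1) k) :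
    u 1 - u 0 = circleAverage h c R := by
  have hcont : Continuous fun k : ℝ => h (circleMap c R (2 * π * n * k)) :=
    hh.continuous_comp_circleMap.comp (continuous_const.mul continuous_id)
  rw [← intervalIntegral.integral_eq_sub_of_hasDerivWithinAt_Icc zero_le_one hu
    (hcont.intervalIntegrable 0 1), integral_comp_circleMap_int_mul_eq_circleAverage hh hn]

end CircleAverage

theorem circleAverage_eq_circleIntegral_div {h : ℂ → ℂ} {c : ℂ} {R : ℝ} (hR : R ≠ 0) :
    circleAverage h c R = (2 * π * I)⁻¹ * ∮ z in C(c, R), h z / (z - c) := by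
  simp_rw [circleAverage_eq_circleIntegral hR, smul_eq_mul, div_eq_inv_mul]

theorem exp_two_pi_I_mul_eq_circleMap (n : ℤ) (k : ℝ) :
    exp (2 * π * I * n * k) = circleMap 0 1 (2 * π * n * k) := by
  simp only [circleMap, ofReal_one, one_mul, zero_add]
  push_cast
  ring_nf

theorem monodromy_translation_general
    (m : ℕ) (η : ℤ) (hη : η = 1 ∨ η = -1)
    (ρ ρ' : ℝ) (hρ : ρ < 1) (hρ' : 1 < ρ')
    (f g : ℂ → ℂ)
    (hf : DifferentiableOn ℂ f {z : ℂ | ρ < ‖z‖ ∧ ‖z‖ < ρ'})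
    (hg : DifferentiableOn ℂ g {z : ℂ | ρ < ‖z‖ ∧ ‖z‖ < ρ'})
    (hg0 : ∀ z ∈ {z : ℂ | ρ < ‖z‖ ∧ ‖z‖ < ρ'}, g z ≠ 0)
    (t s : ℝ → ℂ)
    (ht : ∀ k ∈ Icc (0:ℝ) 1, HasDerivWithinAt t
      (-(2 * (π : ℂ) * I / (m : ℂ) ^ 2) * f (Complex.exp (2 * (π : ℂ) * I * (η : ℂ) * (k : ℂ))))
      (Icc (0:ℝ) 1) k)
    (hs : ∀ k ∈ Icc (0:ℝ) 1, HasDerivWithinAt s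
      ((2 * (π : ℂ) * I / (m : ℂ)) * (g (Complex.exp (2 * (π : ℂ) * I * (η : ℂ) * (k : ℂ))))⁻¹)
      (Icc (0:ℝ) 1) k) :
    t 1 = t 0 - (2 * (π : ℂ) * I / (m : ℂ) ^ 2) *
        ((2 * (π : ℂ) * I)⁻¹ * ∮ z in C(0, 1), f z / z) ∧
    s 1 = s 0 + (2 * (π : ℂ) * I / (m : ℂ)) *
        ((2 * (π : ℂ) * I)⁻¹ * ∮ z in C(0, 1), (z * g z)⁻¹) := by
  have hη0 : η ≠ 0 := by rcases hη with rfl | rfl <;> norm_num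
  have hsphere : Metric.sphere (0:ℂ) |1| ⊆ {z : ℂ | ρ < ‖z‖ ∧ ‖z‖ < ρ'} := fun z hz => by
    simp only [abs_one, mem_sphere_zero_iff_norm] at hz
    exact ⟨hz ▸ hρ, hz ▸ hρ'⟩
  have hfc : ContinuousOn f (Metric.sphere 0 |1|) := hf.continuousOn.mono hsphere
  have hgc : ContinuousOn (fun z => (g z)⁻¹) (Metric.sphere 0 |1|) :=
    (hg.continuousOn.mono hsphere).inv₀ fun z hz => hg0 z (hsphere hz)
  simp_rw [exp_two_pi_I_mul_eq_circleMap] at ht hs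
  have hft : t 1 - t 0 = circleAverage (fun z => -(2 * π * I / m ^ 2) * f z) 0 1 :=
    sub_eq_circleAverage_of_hasDerivWithinAt (continuousOn_const.mul hfc) hη0 ht
  have hgs : s 1 - s 0 = circleAverage (fun z => 2 * π * I / m * (g z)⁻¹) 0 1 :=
    sub_eq_circleAverage_of_hasDerivWithinAt (continuousOn_const.mul hgc) hη0 hs
  rw [circleAverage_eq_circleIntegral_div one_ne_zero] at hft hgs
  simp_rw [sub_zero, mul_div_assoc, circleIntegral.integral_const_mul] at hft hgs
  simp_rw [mul_inv_rev, ← div_eq_mul_inv]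
  constructor
  · linear_combination hft
  · linear_combination hgs

/-- **The monodromy translation `φ₂` along `σ₂` (Table 1).**
Let `m ≥ 1`, `η ∈ {−1,1}`, and let `A = {ρ < |z| < ρ'}` be an annulus around the unit
circle.  Let `f` be holomorphic on `A`, `g` holomorphic and nowhere vanishing on `A`, and
let `f₀ = (2πi)⁻¹ ∮_{|z|=1} f(z)/z dz` and `g₀ = (2πi)⁻¹ ∮_{|z|=1} (z·g(z))⁻¹ dz` be the
constant Laurent coefficients of `f` and `1/g`.  If `t, s : [0,1] → ℂ` solve
`t' = −(2πi/m²)·f(e^{2πiηk})` and `s' = (2πi/m)·g(e^{2πiηk})⁻¹`, then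
`t(1) = t(0) − (2πi/m²)·f₀` and `s(1) = s(0) + (2πi/m)·g₀`. -/
theorem monodromy_translation
    (m : ℕ) (hm : 0 < m) (η : ℤ) (hη : η = 1 ∨ η = -1)
    (ρ ρ' : ℝ) (hρ : ρ < 1) (hρ' : 1 < ρ')
    (f g : ℂ → ℂ)
    (hf : DifferentiableOn ℂ f {z : ℂ | ρ < ‖z‖ ∧ ‖z‖ < ρ'})
    (hg : DifferentiableOn ℂ g {z : ℂ | ρ < ‖z‖ ∧ ‖z‖ < ρ'})
    (hg0 : ∀ z ∈ {z : ℂ | ρ < ‖z‖ ∧ ‖z‖ < ρ'}, g z ≠ 0)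
    (t s : ℝ → ℂ)
    (ht : ∀ k ∈ Icc (0:ℝ) 1, HasDerivWithinAt t
      (-(2 * (π : ℂ) * I / (m : ℂ) ^ 2) * f (Complex.exp (2 * (π : ℂ) * I * (η : ℂ) * (k : ℂ))))
      (Icc (0:ℝ) 1) k)
    (hs : ∀ k ∈ Icc (0:ℝ) 1, HasDerivWithinAt s
      ((2 * (π : ℂ) * I / (m : ℂ)) * (g (Complex.exp (2 * (π : ℂ) * I * (η : ℂ) * (k : ℂ))))⁻¹)
      (Icc (0:ℝ) 1) k) :
    t 1 = t 0 - (2 * (π : ℂ) * I / (m : ℂ) ^ 2) *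
        ((2 * (π : ℂ) * I)⁻¹ * ∮ z in C(0, 1), f z / z) ∧
    s 1 = s 0 + (2 * (π : ℂ) * I / (m : ℂ)) *
        ((2 * (π : ℂ) * I)⁻¹ * ∮ z in C(0, 1), (z * g z)⁻¹) :=
  monodromy_translation_general m η hη ρ ρ' hρ hρ' f g hf hg hg0 t s ht hs
end

section
/- Let a, b, m, n be positive integers, let r be a positive integer, and let ρ > 0. Let f be holomorphic on D(0,ρ) \ {0} ⊆ ℂ and suppose that z ↦ z^r·f(z) extends to a holomorphic function on D(0,ρ) whose value at 0 is nonzero (f has a pole of order exactly r at 0). Suppose there exist ρ' > 0 with (ρ')^(n+m) < ρ and a holomorphic function F on the polydisc {(x,y) ∈ ℂ² : |x| < ρ', |y| < ρ'} such that F(x,y) = x^a·y^b·f(x^n·y^m) whenever x·y ≠ 0. Then b ≥ m·r and a ≥ n·r. -/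
open Complex Metric Filter Topology

/-! Restrict `F` to the slice `x = x₀` with `x₀ ≠ 0` small. Writing `f(z) = F₁(z) / z^r` there gives
`y^(mr) F(x₀, y) = y^b · x₀^a F₁(x₀ⁿ yᵐ) / x₀^(nr)` for `y ≠ 0`. If `b < mr`, divide by `y^b`: the left side
tends to `0` as `y → 0` since `F` is continuous at `(x₀, 0)`, while the right side tends to
`x₀^a F₁(0) / x₀^(nr) ≠ 0`. The other inequality follows from the slice `y = y₀`. -/

section OrderComparison

variable {𝕜 : Type*} [NontriviallyNormedField 𝕜]

theorem le_of_eventually_pow_mul_eq_pow_mul {g h : 𝕜 → 𝕜} {p q : ℕ}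
    (hg : ContinuousAt g 0) (hh : ContinuousAt h 0) (hh0 : h 0 ≠ 0)
    (hgh : ∀ᶠ y in 𝓝[≠] 0, y ^ p * g y = y ^ q * h y) : p ≤ q := by
  by_contra! hqp
  have hcancel : ∀ᶠ y in 𝓝[≠] 0, y ^ (p - q) * g y = h y := by
    filter_upwards [hgh, self_mem_nhdsWithin] with y hy hy0
    have hyq : y ^ q ≠ 0 := pow_ne_zero q hy0
    rw [← Nat.sub_add_cancel hqp.le, pow_add] at hy
    exact mul_left_cancel₀ hyq (by linear_combination hy)
  have hlim : Tendsto (fun y => y ^ (p - q) * g y) (𝓝[≠] 0) (𝓝 0) := by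
    have hcont : ContinuousAt (fun y => y ^ (p - q) * g y) 0 :=
      (continuous_pow (p - q)).continuousAt.mul hg
    simpa [zero_pow (Nat.sub_ne_zero_of_lt hqp)] using hcont.tendsto.mono_left nhdsWithin_le_nhds
  exact hh0 (tendsto_nhds_unique (hlim.congr' hcancel) (hh.tendsto.mono_left nhdsWithin_le_nhds)).symm

theorem tendsto_const_mul_pow_nhdsNE {c : 𝕜} (hc : c ≠ 0) {m : ℕ} (hm : 0 < m) :
    Tendsto (fun y : 𝕜 => c * y ^ m) (𝓝[≠] 0) (𝓝[≠] 0) := by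
  refine tendsto_nhdsWithin_iff.2 ⟨?_, ?_⟩
  · exact ((continuous_const.mul (continuous_pow m)).tendsto' 0 0 (by simp [hm.ne'])).mono_left
      nhdsWithin_le_nhds
  · filter_upwards [self_mem_nhdsWithin] with y hy
    exact mul_ne_zero hc (pow_ne_zero m hy)

theorem mul_le_of_continuousAt_of_pole {f F₁ g : 𝕜 → 𝕜} {b m r : ℕ} {c d : 𝕜}
    (hc : c ≠ 0) (hd : d ≠ 0)
    (hF₁ : ContinuousAt F₁ 0) (hF₁0 : F₁ 0 ≠ 0) (hF₁f : ∀ᶠ z in 𝓝[≠] 0, F₁ z = z ^ r * f z)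
    (hg : ContinuousAt g 0) (hgf : ∀ᶠ y in 𝓝[≠] 0, g y = d * y ^ b * f (c * y ^ m)) :
    m * r ≤ b := by
  rcases Nat.eq_zero_or_pos m with rfl | hm
  · simp
  have hpole : ∀ᶠ y in 𝓝[≠] 0, F₁ (c * y ^ m) = (c * y ^ m) ^ r * f (c * y ^ m) :=
    tendsto_const_mul_pow_nhdsNE hc hm hF₁f
  refine le_of_eventually_pow_mul_eq_pow_mul (h := fun y => d * F₁ (c * y ^ m) / c ^ r) hg ?_ ?_ ?_
  · exact ((hF₁.comp_of_eq (by fun_prop) (by simp [hm.ne'])).const_mul d).div_const _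
  · simp [hm.ne', hd, hF₁0, hc]
  · filter_upwards [hgf, hpole] with y hgy hFy
    rw [hgy, hFy]
    field_simp
    ring

end OrderComparison

theorem pole_order_exponent_estimate_general
    (a b m n : ℕ)
    (r : ℕ) (ρ : ℝ) (hρ : 0 < ρ)
    (f : ℂ → ℂ)
    (F₁ : ℂ → ℂ) (hF₁ : DifferentiableOn ℂ F₁ (ball (0 : ℂ) ρ))
    (hF₁f : ∀ z ∈ ball (0 : ℂ) ρ \ {0}, F₁ z = z ^ r * f z)
    (hF₁0 : F₁ 0 ≠ 0)
    (ρ' : ℝ) (hρ' : 0 < ρ')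
    (F : ℂ × ℂ → ℂ)
    (hF : DifferentiableOn ℂ F {q : ℂ × ℂ | ‖q.1‖ < ρ' ∧ ‖q.2‖ < ρ'})
    (hFf : ∀ q ∈ {q : ℂ × ℂ | ‖q.1‖ < ρ' ∧ ‖q.2‖ < ρ'}, q.1 * q.2 ≠ 0 →
      F q = q.1 ^ a * q.2 ^ b * f (q.1 ^ n * q.2 ^ m)) :
    b ≥ m * r ∧ a ≥ n * r := by
  have hpole : ∀ᶠ z in 𝓝[≠] 0, F₁ z = z ^ r * f z :=
    Filter.eventually_of_mem (sdiff_mem_nhdsWithin_compl (ball_mem_nhds 0 hρ) _) hF₁f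
  have hF₁c : ContinuousAt F₁ 0 := (hF₁.differentiableAt (ball_mem_nhds 0 hρ)).continuousAt
  have hFc : ∀ x y, ‖x‖ < ρ' → ‖y‖ < ρ' → ContinuousAt F (x, y) := fun x y hx hy =>
    (hF.differentiableAt (((isOpen_lt continuous_fst.norm continuous_const).inter
      (isOpen_lt continuous_snd.norm continuous_const)).mem_nhds ⟨hx, hy⟩)).continuousAt
  have hsmall : ∀ᶠ y in 𝓝[≠] (0 : ℂ), ‖y‖ < ρ' ∧ y ≠ 0 := by
    filter_upwards [nhdsWithin_le_nhds (ball_mem_nhds (0 : ℂ) hρ'), self_mem_nhdsWithin]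
      with y hy hy0
    exact ⟨by simpa using hy, hy0⟩
  set t : ℂ := ((ρ' / 2 : ℝ) : ℂ)
  have ht : ‖t‖ < ρ' := by simpa [t, abs_of_pos hρ'] using hρ'
  have ht0 : t ≠ 0 := by simp [t, hρ'.ne']
  constructor
  · refine mul_le_of_continuousAt_of_pole (pow_ne_zero n ht0) (pow_ne_zero a ht0) hF₁c hF₁0 hpole
      (g := fun y => F (t, y)) ((hFc t 0 ht (by simpa)).comp (f := fun y => (t, y)) (by fun_prop)) ?_
    filter_upwards [hsmall] with y ⟨hy, hy0⟩
    exact hFf (t, y) ⟨ht, hy⟩ (mul_ne_zero ht0 hy0)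
  · refine mul_le_of_continuousAt_of_pole (pow_ne_zero m ht0) (pow_ne_zero b ht0) hF₁c hF₁0 hpole
      (g := fun x => F (x, t)) ((hFc 0 t (by simpa) ht).comp (f := fun x => (x, t)) (by fun_prop)) ?_
    filter_upwards [hsmall] with x ⟨hx, hx0⟩
    rw [hFf (x, t) ⟨hx, ht⟩ (mul_ne_zero hx0 ht0), mul_comm (x ^ n)]
    ring

/-- **Exponent estimate from holomorphy across the axes.**
If `f` has a pole of order exactly `r` at `0` (i.e. `z^r·f(z)` extends holomorphically to
`D(0,ρ)` with nonzero value at `0`) and `(x,y) ↦ xᵃ·yᵇ·f(xⁿ·yᵐ)` extends to a holomorphic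
function `F` on a polydisc, then `b ≥ m·r` and `a ≥ n·r`. -/
theorem pole_order_exponent_estimate
    (a b m n : ℕ) (ha : 0 < a) (hb : 0 < b) (hm : 0 < m) (hn : 0 < n)
    (r : ℕ) (hr : 0 < r) (ρ : ℝ) (hρ : 0 < ρ)
    (f : ℂ → ℂ) (hf : DifferentiableOn ℂ f (ball (0 : ℂ) ρ \ {0}))
    (F₁ : ℂ → ℂ) (hF₁ : DifferentiableOn ℂ F₁ (ball (0 : ℂ) ρ))
    (hF₁f : ∀ z ∈ ball (0 : ℂ) ρ \ {0}, F₁ z = z ^ r * f z)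
    (hF₁0 : F₁ 0 ≠ 0)
    (ρ' : ℝ) (hρ' : 0 < ρ') (hρ'ρ : ρ' ^ (n + m) < ρ)
    (F : ℂ × ℂ → ℂ)
    (hF : DifferentiableOn ℂ F {q : ℂ × ℂ | ‖q.1‖ < ρ' ∧ ‖q.2‖ < ρ'})
    (hFf : ∀ q ∈ {q : ℂ × ℂ | ‖q.1‖ < ρ' ∧ ‖q.2‖ < ρ'}, q.1 * q.2 ≠ 0 →
      F q = q.1 ^ a * q.2 ^ b * f (q.1 ^ n * q.2 ^ m)) :
    b ≥ m * r ∧ a ≥ n * r :=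
  pole_order_exponent_estimate_general a b m n r ρ hρ f F₁ hF₁ hF₁f hF₁0 ρ' hρ' F hF hFf
end

section
/- Let a, b, m, n be positive integers with a·m − b·n = 1, let D ⊆ ℂ be open, let g be holomorphic on D and f holomorphic on D \ {0}. Define H : {(z,w) ∈ ℂ² : z ≠ 0} → ℂ² by H(z,w) = (z^m, w·z^{−n}), and define the vector fields 𝒳(z,w) = (z²·w^b, 0) and 𝒴(z,w) = g(w^m)·( z·(−b + z·w^b·f(w^m)/m), w ). Let X(x,y) = x^a·y^b·(m·x, −n·y) and Y(x,y) = g(x^n·y^m)·( x·(−b·m + x^a·y^b·f(x^n·y^m)), y·(a·m − (n/m)·x^a·y^b·f(x^n·y^m)) ). Then for every (z,w) with z ≠ 0, w ≠ 0 and w^m ∈ D \ {0}: (x^n·y^m)∘H (z,w) = w^m, DH(z,w)(𝒳(z,w)) = X(H(z,w)), and DH(z,w)(𝒴(z,w)) = Y(H(z,w)). -/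
/-!
The chain rule gives `DH(z,w) v = (m z^(m-1) v₁, (v₂ - n w v₁ / z) / zⁿ)`, and `a m = b n + 1`
makes the monomial `xᵃ yᵇ` pull back along `H` to `z wᵇ`. After these two substitutions both
identities are rational identities in `z, w, g(wᵐ), f(wᵐ)`.
-/

def singularCoords {K : Type*} [Field K] (m n : ℕ) (p : K × K) : K × K :=
  (p.1 ^ m, p.2 / p.1 ^ n)

section Algebra

variable {K : Type*} [Field K]

theorem singularCoords_fst_pow_mul_snd_pow (m n : ℕ) {z : K} (w : K) (hz : z ≠ 0) :
    (singularCoords m n (z, w)).1 ^ n * (singularCoords m n (z, w)).2 ^ m = w ^ m := by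
  simp only [singularCoords, div_pow, ← pow_mul]
  rw [mul_comm m n]
  field_simp

theorem singularCoords_fst_pow_mul_snd_pow_of_mul_eq_add_one {a b m n : ℕ}
    (hab : a * m = b * n + 1) {z : K} (w : K) (hz : z ≠ 0) :
    (singularCoords m n (z, w)).1 ^ a * (singularCoords m n (z, w)).2 ^ b = z * w ^ b := by
  simp only [singularCoords, div_pow, ← pow_mul]
  rw [mul_comm m a, hab, pow_succ, mul_comm n b]
  field_simp

end Algebra

theorem fderiv_singularCoords_apply {𝕜 : Type*} [NontriviallyNormedField 𝕜] (m n : ℕ) {z : 𝕜}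
    (w : 𝕜) (hz : z ≠ 0) (v : 𝕜 × 𝕜) :
    fderiv 𝕜 (singularCoords m n) (z, w) v =
      (m * z ^ (m - 1) * v.1, (v.2 - n * w / z * v.1) / z ^ n) := by
  have hfst : HasFDerivAt (Prod.fst : 𝕜 × 𝕜 → 𝕜) (ContinuousLinearMap.fst 𝕜 𝕜 𝕜) (z, w) :=
    hasFDerivAt_fst
  have hderiv : HasFDerivAt (fun p : 𝕜 × 𝕜 => (p.1 ^ m, p.2 * (p.1 ^ n)⁻¹)) _ (z, w) :=
    (hfst.pow m).prodMk
      (hasFDerivAt_snd.fun_mul ((hasFDerivAt_inv (pow_ne_zero n hz)).comp (z, w) (hfst.pow n)))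
  have hsingularCoords :
      singularCoords m n = fun p : 𝕜 × 𝕜 => (p.1 ^ m, p.2 * (p.1 ^ n)⁻¹) := by
    funext p
    simp [singularCoords, div_eq_mul_inv]
  rw [hsingularCoords, hderiv.fderiv]
  simp only [nsmul_eq_mul, ContinuousLinearMap.comp_smulₛₗ, RingHom.id_apply,
    ContinuousLinearMap.prod_apply, smul_apply, ContinuousLinearMap.coe_fst', smul_eq_mul, add_apply,
    ContinuousLinearMap.comp_apply, ContinuousLinearMap.toSpanSingleton_apply, mul_neg,
    ContinuousLinearMap.coe_snd', Prod.mk.injEq, true_and]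
  rcases n with _ | n
  · simp
  · simp only [Nat.add_sub_cancel]
    field_simp
    ring

open Complex

theorem singular_coordinates_conjugation_general
    (a b m n : ℕ) (hm : 0 < m)
    (hab : (a * m : ℤ) - (b * n : ℤ) = 1)
    (D : Set ℂ) (g f : ℂ → ℂ)
    (H : ℂ × ℂ → ℂ × ℂ) (hH : ∀ p : ℂ × ℂ, H p = (p.1 ^ m, p.2 / p.1 ^ n))
    (𝒳 𝒴 : ℂ × ℂ → ℂ × ℂ)
    (h𝒳 : ∀ p : ℂ × ℂ, 𝒳 p = (p.1 ^ 2 * p.2 ^ b, 0))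
    (h𝒴 : ∀ p : ℂ × ℂ, 𝒴 p =
      (g (p.2 ^ m) * (p.1 * (-(b : ℂ) + p.1 * p.2 ^ b * f (p.2 ^ m) / (m : ℂ))),
       g (p.2 ^ m) * p.2))
    (X Y : ℂ × ℂ → ℂ × ℂ)
    (hX : ∀ q : ℂ × ℂ, X q =
      (q.1 ^ a * q.2 ^ b * ((m : ℂ) * q.1), q.1 ^ a * q.2 ^ b * (-(n : ℂ) * q.2)))
    (hY : ∀ q : ℂ × ℂ, Y q =
      (g (q.1 ^ n * q.2 ^ m) * (q.1 * (-((b : ℂ) * m) + q.1 ^ a * q.2 ^ b * f (q.1 ^ n * q.2 ^ m))),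
       g (q.1 ^ n * q.2 ^ m) * (q.2 * ((a : ℂ) * m -
         ((n : ℂ) / (m : ℂ)) * (q.1 ^ a * q.2 ^ b * f (q.1 ^ n * q.2 ^ m)))))) :
    ∀ z w : ℂ, z ≠ 0 → w ≠ 0 → w ^ m ∈ D \ {0} →
      (H (z, w)).1 ^ n * (H (z, w)).2 ^ m = w ^ m ∧
      fderiv ℂ H (z, w) (𝒳 (z, w)) = X (H (z, w)) ∧
      fderiv ℂ H (z, w) (𝒴 (z, w)) = Y (H (z, w)) := by
  intro z w hz _ _
  obtain rfl : H = singularCoords m n := funext hH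
  have hab' : a * m = b * n + 1 := by zify; linarith
  have habℂ : (a * m : ℂ) = b * n + 1 := by exact_mod_cast hab'
  have hintegral := singularCoords_fst_pow_mul_snd_pow m n w hz
  have hmonomial := singularCoords_fst_pow_mul_snd_pow_of_mul_eq_add_one hab' w hz
  obtain ⟨k, rfl⟩ := Nat.exists_eq_add_one.mpr hm
  refine ⟨hintegral, ?_, ?_⟩
  · rw [h𝒳, hX, hmonomial, fderiv_singularCoords_apply _ _ _ hz]
    simp only [singularCoords, Nat.add_sub_cancel]
    ext
    · ring
    · field_simp
      ring
  · rw [h𝒴, hY, hmonomial, hintegral, fderiv_singularCoords_apply _ _ _ hz]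
    simp only [singularCoords, Nat.add_sub_cancel]
    ext
    · field_simp
      ring
    · field_simp
      linear_combination -(g (w ^ (k + 1)) * (k + 1 : ℕ)) * habℂ

/-- **The pair `(X, Y)` in the singular coordinates `H(z,w) = (zᵐ, w/zⁿ)`.**
With `a·m − b·n = 1`, the map `H(z,w) = (zᵐ, w·z⁻ⁿ)` pulls the first integral `xⁿ·yᵐ` back
to `wᵐ` and pushes the vector fields `𝒳(z,w) = (z²·wᵇ, 0)` and
`𝒴(z,w) = g(wᵐ)·( z·(−b + z·wᵇ·f(wᵐ)/m), w )` forward to `X` and `Y` respectively: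
`DH(z,w)(𝒳(z,w)) = X(H(z,w))` and `DH(z,w)(𝒴(z,w)) = Y(H(z,w))` for all `(z,w)` with
`z ≠ 0`, `w ≠ 0` and `wᵐ ∈ D \ {0}`. -/
theorem singular_coordinates_conjugation
    (a b m n : ℕ) (ha : 0 < a) (hb : 0 < b) (hm : 0 < m) (hn : 0 < n)
    (hab : (a * m : ℤ) - (b * n : ℤ) = 1)
    (D : Set ℂ) (hD : IsOpen D) (g f : ℂ → ℂ)
    (hg : DifferentiableOn ℂ g D) (hf : DifferentiableOn ℂ f (D \ {0}))
    (H : ℂ × ℂ → ℂ × ℂ) (hH : ∀ p : ℂ × ℂ, H p = (p.1 ^ m, p.2 / p.1 ^ n))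
    (𝒳 𝒴 : ℂ × ℂ → ℂ × ℂ)
    (h𝒳 : ∀ p : ℂ × ℂ, 𝒳 p = (p.1 ^ 2 * p.2 ^ b, 0))
    (h𝒴 : ∀ p : ℂ × ℂ, 𝒴 p =
      (g (p.2 ^ m) * (p.1 * (-(b : ℂ) + p.1 * p.2 ^ b * f (p.2 ^ m) / (m : ℂ))),
       g (p.2 ^ m) * p.2))
    (X Y : ℂ × ℂ → ℂ × ℂ)
    (hX : ∀ q : ℂ × ℂ, X q =
      (q.1 ^ a * q.2 ^ b * ((m : ℂ) * q.1), q.1 ^ a * q.2 ^ b * (-(n : ℂ) * q.2)))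
    (hY : ∀ q : ℂ × ℂ, Y q =
      (g (q.1 ^ n * q.2 ^ m) * (q.1 * (-((b : ℂ) * m) + q.1 ^ a * q.2 ^ b * f (q.1 ^ n * q.2 ^ m))),
       g (q.1 ^ n * q.2 ^ m) * (q.2 * ((a : ℂ) * m -
         ((n : ℂ) / (m : ℂ)) * (q.1 ^ a * q.2 ^ b * f (q.1 ^ n * q.2 ^ m)))))) :
    ∀ z w : ℂ, z ≠ 0 → w ≠ 0 → w ^ m ∈ D \ {0} →
      (H (z, w)).1 ^ n * (H (z, w)).2 ^ m = w ^ m ∧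
      fderiv ℂ H (z, w) (𝒳 (z, w)) = X (H (z, w)) ∧
      fderiv ℂ H (z, w) (𝒴 (z, w)) = Y (H (z, w)) :=
  singular_coordinates_conjugation_general a b m n hm hab D g f H hH 𝒳 𝒴 h𝒳 h𝒴 X Y hX hY
end

section
/- Let m be a nonzero complex number and let f : ℂ → ℂ be continuous on the unit circle; set f₀ = ∫₀¹ f(e^{2πi·k}) dk. Suppose z : [0,1] → ℂ is differentiable, z(k) ≠ 0 for all k ∈ [0,1], and z'(k) = −2πi·z(k)·(1 + e^{2πi·k}·z(k)·f(e^{2πi·k})/m) for all k ∈ [0,1]. Then 1 + (2πi·f₀/m)·z(0) ≠ 0 and z(1) = z(0)/(1 + (2πi·f₀/m)·z(0)). In particular, z(1) = z(0) for every such solution if and only if f₀ = 0. -/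
/-!
Along the loop `w = e^{2πik}` the holonomy equation is a Bernoulli equation in `z`, so it
becomes linear in `1/z`: the function `e^{-2πik}/z(k)` has derivative `2πi·f(e^{2πik})/m`.
Integrating over `[0,1]`, where `e^{-2πi} = 1`, shows that `1/z(1) = 1/z(0) + 2πi·f₀/m`;
the holonomy is a translation in the coordinate `1/z`, i.e. a parabolic Möbius map in `z`.
-/

open Complex Real Set intervalIntegral

theorem HasDerivWithinAt.exp_mul_div_of_bernoulli {a b : ℂ} {w : ℝ → ℂ} {s : Set ℝ} {t : ℝ}
    (hw : HasDerivWithinAt w (a * w t + b * w t ^ 2) s t) (ht : w t ≠ 0) :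
    HasDerivWithinAt (fun u : ℝ => Complex.exp (a * u) / w u) (-(b * Complex.exp (a * t))) s t := by
  have hexp : HasDerivWithinAt (fun u : ℝ => Complex.exp (a * u)) (Complex.exp (a * t) * a) s t := by
    simpa using ((ofRealCLM.hasDerivAt.const_mul a).cexp).hasDerivWithinAt
  refine (hexp.div hw ht).congr_deriv ?_
  field_simp
  ring

theorem exp_two_pi_mul_I_mul_ofReal_mem_sphere (k : ℝ) :
    exp (2 * π * I * k) ∈ Metric.sphere (0 : ℂ) 1 := by
  have hk : 2 * π * I * k = ((2 * π * k : ℝ) : ℂ) * I := by push_cast; ring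
  rw [mem_sphere_zero_iff_norm, hk, norm_exp_ofReal_mul_I]

theorem inv_eq_inv_add_of_holonomy_equation
    (m : ℂ) (f : ℂ → ℂ) (hf : ContinuousOn f (Metric.sphere (0 : ℂ) 1))
    (w : ℝ → ℂ) (hw0 : ∀ k ∈ Icc (0:ℝ) 1, w k ≠ 0)
    (hw : ∀ k ∈ Icc (0:ℝ) 1, HasDerivWithinAt w
      (-(2 * (π : ℂ) * I) * w k *
        (1 + exp (2 * (π : ℂ) * I * (k : ℂ)) * w k * f (exp (2 * (π : ℂ) * I * (k : ℂ))) / m))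
      (Icc (0:ℝ) 1) k) :
    (w 1)⁻¹ = (w 0)⁻¹ + 2 * π * I * (∫ k in (0:ℝ)..1, f (exp (2 * π * I * k))) / m := by
  set c : ℂ := 2 * π * I
  set F : ℝ → ℂ := fun u => exp (-c * u) / w u
  have hF : ∀ k ∈ Icc (0:ℝ) 1, HasDerivWithinAt F (c * f (exp (c * k)) / m) (Icc 0 1) k := by
    intro k hk
    have hbern := (hw k hk).congr_deriv
      (by ring : _ = -c * w k + -(c * exp (c * k) * f (exp (c * k)) / m) * w k ^ 2)
    convert hbern.exp_mul_div_of_bernoulli (hw0 k hk) using 1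
    have hcancel : exp (c * k) * exp (-c * k) = 1 := by rw [← Complex.exp_add]; simp
    linear_combination -(c * f (exp (c * k)) / m) * hcancel
  have hF'_cont : Continuous fun k : ℝ => c * f (exp (c * k)) / m :=
    (continuous_const.mul (hf.comp_continuous (by fun_prop)
      exp_two_pi_mul_I_mul_ofReal_mem_sphere)).div_const m
  have hFTC := integral_eq_sub_of_hasDeriv_right_of_le zero_le_one
    (fun k hk => (hF k hk).continuousWithinAt)
    (fun k hk => ((hF k (Ioo_subset_Icc_self hk)).hasDerivAt
      (Icc_mem_nhds hk.1 hk.2)).hasDerivWithinAt)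
    (hF'_cont.intervalIntegrable 0 1)
  have hexp : exp (-c) = 1 := by simp [c, Complex.exp_neg]
  rw [integral_div, integral_const_mul] at hFTC
  simp only [F, ofReal_one, ofReal_zero, mul_one, mul_zero, hexp, Complex.exp_zero, one_div] at hFTC
  linear_combination -hFTC

theorem eq_div_one_add_mul_of_inv_eq_inv_add {K : Type*} [Field K] {x y c : K}
    (hx : x ≠ 0) (hy : y ≠ 0) (h : y⁻¹ = x⁻¹ + c) : 1 + c * x ≠ 0 ∧ y = x / (1 + c * x) := by
  have hc : 1 + c * x = x * y⁻¹ := by rw [h]; field_simp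
  rw [hc]
  exact ⟨mul_ne_zero hx (inv_ne_zero hy), by field_simp⟩

/-- **The holonomy of the invariant curve `D = {z = 0}` (Lemma 3.3).**
Let `m ≠ 0` and let `f` be continuous on the unit circle, with
`f₀ = ∫₀¹ f(e^{2πik}) dk`.  Every nonvanishing differentiable solution
`z : [0,1] → ℂ` of `z' = −2πi·z·(1 + e^{2πik}·z·f(e^{2πik})/m)` satisfies
`1 + (2πi·f₀/m)·z(0) ≠ 0` and `z(1) = z(0)/(1 + (2πi·f₀/m)·z(0))`; in particular
`z(1) = z(0)` for every such solution if and only if `f₀ = 0`. -/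
theorem holonomy_of_invariant_curve
    (m : ℂ) (hm : m ≠ 0) (f : ℂ → ℂ)
    (hf : ContinuousOn f (Metric.sphere (0 : ℂ) 1))
    (f₀ : ℂ) (hf₀ : f₀ = ∫ k in (0:ℝ)..1, f (Complex.exp (2 * (π : ℂ) * I * (k : ℂ))))
    (z : ℝ → ℂ) (hz0 : ∀ k ∈ Icc (0:ℝ) 1, z k ≠ 0)
    (hz : ∀ k ∈ Icc (0:ℝ) 1, HasDerivWithinAt z
      (-(2 * (π : ℂ) * I) * z k *
        (1 + Complex.exp (2 * (π : ℂ) * I * (k : ℂ)) * z k *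
          f (Complex.exp (2 * (π : ℂ) * I * (k : ℂ))) / m))
      (Icc (0:ℝ) 1) k) :
    (1 + (2 * (π : ℂ) * I * f₀ / m) * z 0 ≠ 0 ∧
      z 1 = z 0 / (1 + (2 * (π : ℂ) * I * f₀ / m) * z 0)) ∧
    ((∀ w : ℝ → ℂ, (∀ k ∈ Icc (0:ℝ) 1, w k ≠ 0) →
        (∀ k ∈ Icc (0:ℝ) 1, HasDerivWithinAt w
          (-(2 * (π : ℂ) * I) * w k *
            (1 + Complex.exp (2 * (π : ℂ) * I * (k : ℂ)) * w k *
              f (Complex.exp (2 * (π : ℂ) * I * (k : ℂ))) / m))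
          (Icc (0:ℝ) 1) k) → w 1 = w 0) ↔ f₀ = 0) := by
  subst hf₀
  have h0 : (0 : ℝ) ∈ Icc (0:ℝ) 1 := left_mem_Icc.mpr zero_le_one
  have h1 : (1 : ℝ) ∈ Icc (0:ℝ) 1 := right_mem_Icc.mpr zero_le_one
  have hinv := inv_eq_inv_add_of_holonomy_equation m f hf z hz0 hz
  refine ⟨eq_div_one_add_mul_of_inv_eq_inv_add (hz0 0 h0) (hz0 1 h1) hinv, ?_, ?_⟩
  · intro hperiodic
    rw [hperiodic z hz0 hz, left_eq_add] at hinv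
    simpa [hm, pi_ne_zero, I_ne_zero] using hinv
  · intro hf₀ w hw0 hw
    have hw_inv := inv_eq_inv_add_of_holonomy_equation m f hf w hw0 hw
    rwa [hf₀, mul_zero, zero_div, add_zero, inv_inj] at hw_inv
end

section
/- Let C ≥ 0 and let h : [0,1] → ℂ be continuous with |h(k)| ≤ C for all k ∈ [0,1]. Suppose c : [0,1] → ℂ is differentiable, c(k) ≠ 0 for all k, and c'(k) = c(k)²·h(k) for all k ∈ [0,1]. If C·|c(0)| < 1, then for every k ∈ [0,1] one has 1 − c(0)·∫₀ᵏ h(t) dt ≠ 0, c(k) = c(0)/(1 − c(0)·∫₀ᵏ h(t) dt), and |c(k) − c(0)| ≤ C·|c(0)|²·k/(1 − C·|c(0)|·k). -/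
open Complex Set

/-! Along a nonvanishing solution of `c' = c² h` the reciprocal satisfies `(1/c)' = -h`, so
`1/c(k) = 1/c(0) - ∫₀ᵏ h`, which is the explicit solution `c(k) = c(0)/(1 - c(0) ∫₀ᵏ h)`.
Since `‖∫₀ᵏ h‖ ≤ C k`, the denominator has norm at least `1 - C ‖c(0)‖ k > 0`, and
`c(k) - c(0) = c(0)² (∫₀ᵏ h) / (1 - c(0) ∫₀ᵏ h)` gives the estimate. -/

section Field

variable {𝕜 : Type*} [NormedField 𝕜]

theorem one_sub_mul_ne_zero_and_eq_div_of_inv_eq_inv_sub {x y I : 𝕜} (hx : x ≠ 0) (hy : y ≠ 0)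
    (hxy : y⁻¹ = x⁻¹ - I) : 1 - x * I ≠ 0 ∧ y = x / (1 - x * I) := by
  have hden : 1 - x * I = x / y := by
    rw [div_eq_mul_inv, hxy, mul_sub, mul_inv_cancel₀ hx]
  exact ⟨hden ▸ div_ne_zero hx hy, by rw [hden, div_div_cancel₀ hx]⟩

theorem norm_div_one_sub_mul_sub_le {x I : 𝕜} {M : ℝ} (hI : ‖I‖ ≤ M) (hxM : ‖x‖ * M < 1) :
    ‖x / (1 - x * I) - x‖ ≤ ‖x‖ ^ 2 * M / (1 - ‖x‖ * M) := by
  have hden : 1 - ‖x‖ * M ≤ ‖1 - x * I‖ := by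
    calc 1 - ‖x‖ * M ≤ ‖(1 : 𝕜)‖ - ‖x * I‖ := by
          rw [norm_one, norm_mul]
          gcongr
      _ ≤ ‖1 - x * I‖ := norm_sub_norm_le _ _
  have hne : 1 - x * I ≠ 0 := norm_pos_iff.1 (by linarith)
  have hdiff : x / (1 - x * I) - x = x ^ 2 * I / (1 - x * I) := by
    field_simp
    ring
  rw [hdiff, norm_div, norm_mul, norm_pow]
  have hM : 0 ≤ M := (norm_nonneg I).trans hI
  gcongr

end Field

section Riccati

variable {𝕜 : Type*} [NontriviallyNormedField 𝕜] [NormedAlgebra ℝ 𝕜]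

theorem HasDerivWithinAt.inv_of_riccati {c h : ℝ → 𝕜} {s : Set ℝ} {x : ℝ}
    (hc : HasDerivWithinAt c (c x ^ 2 * h x) s x) (hx : c x ≠ 0) :
    HasDerivWithinAt (fun t => (c t)⁻¹) (-h x) s x := by
  have hinv := hc.inv hx
  rwa [neg_div, mul_div_cancel_left₀ _ (pow_ne_zero 2 hx)] at hinv

theorem inv_eq_inv_sub_integral_of_riccati [CompleteSpace 𝕜] {c h : ℝ → 𝕜} {a b : ℝ}
    (hab : a ≤ b) (hh : IntervalIntegrable h MeasureTheory.volume a b)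
    (hc0 : ∀ x ∈ Icc a b, c x ≠ 0)
    (hc : ∀ x ∈ Icc a b, HasDerivWithinAt c (c x ^ 2 * h x) (Icc a b) x) :
    (c b)⁻¹ = (c a)⁻¹ - ∫ x in a..b, h x := by
  have hinv (x) (hx : x ∈ Icc a b) := (hc x hx).inv_of_riccati (hc0 x hx)
  have hFTC : ∫ x in a..b, -h x = (c b)⁻¹ - (c a)⁻¹ := by
    refine intervalIntegral.integral_eq_sub_of_hasDeriv_right_of_le hab
      (fun x hx => (hinv x hx).continuousWithinAt) (fun x hx => ?_) hh.neg
    exact ((hinv x (Ioo_subset_Icc_self hx)).hasDerivAt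
      (Icc_mem_nhds hx.1 hx.2)).hasDerivWithinAt
  rw [intervalIntegral.integral_neg] at hFTC
  linear_combination -hFTC

end Riccati

theorem riccati_estimate_general
    (C : ℝ) (h : ℝ → ℂ)
    (hcont : ContinuousOn h (Icc (0:ℝ) 1))
    (hbound : ∀ k ∈ Icc (0:ℝ) 1, ‖h k‖ ≤ C)
    (c : ℝ → ℂ) (hc0 : ∀ k ∈ Icc (0:ℝ) 1, c k ≠ 0)
    (hc : ∀ k ∈ Icc (0:ℝ) 1, HasDerivWithinAt c (c k ^ 2 * h k) (Icc (0:ℝ) 1) k)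
    (hsmall : C * ‖c 0‖ < 1) :
    ∀ k ∈ Icc (0:ℝ) 1,
      1 - c 0 * (∫ t in (0:ℝ)..k, h t) ≠ 0 ∧
      c k = c 0 / (1 - c 0 * (∫ t in (0:ℝ)..k, h t)) ∧
      ‖c k - c 0‖ ≤ C * ‖c 0‖ ^ 2 * k / (1 - C * ‖c 0‖ * k) := by
  intro k hk
  have h01 : (0 : ℝ) ∈ Icc (0 : ℝ) 1 := ⟨le_rfl, zero_le_one⟩
  have hsub : Icc 0 k ⊆ Icc (0 : ℝ) 1 := Icc_subset_Icc le_rfl hk.2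
  have hinv : (c k)⁻¹ = (c 0)⁻¹ - ∫ t in (0:ℝ)..k, h t :=
    inv_eq_inv_sub_integral_of_riccati hk.1
      ((hcont.mono (uIcc_of_le hk.1 ▸ hsub)).intervalIntegrable)
      (fun x hx => hc0 x (hsub hx)) (fun x hx => (hc x (hsub hx)).mono hsub)
  obtain ⟨hden, hck⟩ :=
    one_sub_mul_ne_zero_and_eq_div_of_inv_eq_inv_sub (hc0 0 h01) (hc0 k hk) hinv
  refine ⟨hden, hck, ?_⟩
  have hI : ‖∫ t in (0:ℝ)..k, h t‖ ≤ C * k := by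
    simpa [abs_of_nonneg hk.1] using intervalIntegral.norm_integral_le_of_norm_le_const
      fun x hx => hbound x (hsub (Ioc_subset_Icc_self (uIoc_of_le hk.1 ▸ hx)))
  have hC : 0 ≤ C := (norm_nonneg _).trans (hbound 0 h01)
  have hsmall' : ‖c 0‖ * (C * k) < 1 := by
    nlinarith [mul_nonneg (mul_nonneg hC (norm_nonneg (c 0))) (sub_nonneg.2 hk.2)]
  convert hck ▸ norm_div_one_sub_mul_sub_le hI hsmall' using 2 <;> ring

/-- **Quantitative Riccati estimate (estimate (3.3)).**
Let `|h| ≤ C` on `[0,1]` and let `c : [0,1] → ℂ` be a nonvanishing differentiable solution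
of `c' = c²·h`.  If `C·|c(0)| < 1` then for every `k ∈ [0,1]`,
`1 − c(0)·∫₀ᵏ h ≠ 0`, `c(k) = c(0)/(1 − c(0)·∫₀ᵏ h)` and
`|c(k) − c(0)| ≤ C·|c(0)|²·k/(1 − C·|c(0)|·k)`. -/
theorem riccati_estimate
    (C : ℝ) (hC : 0 ≤ C) (h : ℝ → ℂ)
    (hcont : ContinuousOn h (Icc (0:ℝ) 1))
    (hbound : ∀ k ∈ Icc (0:ℝ) 1, ‖h k‖ ≤ C)
    (c : ℝ → ℂ) (hc0 : ∀ k ∈ Icc (0:ℝ) 1, c k ≠ 0)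
    (hc : ∀ k ∈ Icc (0:ℝ) 1, HasDerivWithinAt c (c k ^ 2 * h k) (Icc (0:ℝ) 1) k)
    (hsmall : C * ‖c 0‖ < 1) :
    ∀ k ∈ Icc (0:ℝ) 1,
      1 - c 0 * (∫ t in (0:ℝ)..k, h t) ≠ 0 ∧
      c k = c 0 / (1 - c 0 * (∫ t in (0:ℝ)..k, h t)) ∧
      ‖c k - c 0‖ ≤ C * ‖c 0‖ ^ 2 * k / (1 - C * ‖c 0‖ * k) :=
  riccati_estimate_general C h hcont hbound c hc0 hc hsmall
end

section
/- Let m, n, a, b be positive integers with a·m − b·n = 1, let r be a nonnegative integer with b ≥ m·r, let ρ > 0, and let f be holomorphic on D(0,ρ) \ {0} ⊆ ℂ such that z ↦ z^r·f(z) extends holomorphically to D(0,ρ). Then for every ε > 0 there exists δ₀ ∈ (0, ρ^{1/m}) such that for every δ ∈ (0, δ₀) there is a differentiable map z : [0,1] → ℂ satisfying z'(k) = 2πi·z(k)·( −b + (1/m)·z(k)·δ^b·e^{2πi·b·k}·f(δ^m·e^{2πi·m·k}) ) for all k ∈ [0,1], and (δ/ε)^{1/m} < |z(k)| < ε^{1/m}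 for all k ∈ [0,1]. -/
/-!
The equation is of Bernoulli type: with `c = -2πib`, the function `z = e^{ck} / v` solves it
exactly when `v' = -(2πi/m) δ^b f(δ^m e^{2πimk})`, so one takes `v = R - ∫₀ᵏ (…)`.
Because `z^r f(z)` is bounded by some `K` near `0` and `b ≥ m r`, the forcing term is bounded by
`C = 2πK/m` uniformly in `δ < 1`; hence `|v|` stays in `[R - C, R + C]`. With
`R = ε^{-1/m} + C + 1` and `δ` small, `|z| = 1/|v|` lies in the required annulus.
-/

open Complex Real Set Metric Filter Topology

theorem exists_norm_pow_mul_le_of_continuousAt {𝕜 : Type*} [NormedField 𝕜] {f F : 𝕜 → 𝕜}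
    {r : ℕ} (hF : ContinuousAt F 0) (hFf : ∀ᶠ z in 𝓝[≠] 0, F z = z ^ r * f z) :
    ∃ K η : ℝ, 0 < K ∧ 0 < η ∧ ∀ w : 𝕜, w ≠ 0 → ‖w‖ < η → ‖w‖ ^ r * ‖f w‖ ≤ K := by
  have hbdd : ∀ᶠ z in 𝓝 (0 : 𝕜), z ≠ 0 → ‖z‖ ^ r * ‖f z‖ ≤ ‖F 0‖ + 1 := by
    filter_upwards [hF.norm.eventually (gt_mem_nhds (lt_add_one ‖F 0‖)),
      eventually_nhdsWithin_iff.mp hFf] with z hFz hzf hz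
    rw [← norm_pow, ← norm_mul, ← hzf hz]
    exact hFz.le
  obtain ⟨η, hη, hη'⟩ := Metric.eventually_nhds_iff.mp hbdd
  exact ⟨_, η, by positivity, hη, fun w hw hwη => hη' (by rwa [dist_zero_right]) hw⟩

theorem hasDerivAt_cexp_mul_div {c w : ℂ} {v : ℝ → ℂ} {k : ℝ} (hv : HasDerivAt v (-w) k)
    (hv0 : v k ≠ 0) :
    HasDerivAt (fun t : ℝ => exp (c * t) / v t)
      (exp (c * k) / v k * (c + exp (c * k) / v k * (exp (-(c * k)) * w))) k := by
  have hexp : HasDerivAt (fun t : ℝ => exp (c * t)) (exp (c * k) * c) k :=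
    (((hasDerivAt_id (k : ℂ)).const_mul c).cexp.comp_ofReal).congr_deriv (by simp)
  refine (hexp.div hv hv0).congr_deriv ?_
  rw [Complex.exp_neg]
  field_simp [Complex.exp_ne_zero]
  ring

theorem exists_bernoulli_solution {c : ℂ} (hc : c.re = 0) {g : ℝ → ℂ} (hg : Continuous g)
    {M R : ℝ} (hgM : ∀ s ∈ Icc (0 : ℝ) 1, ‖g s‖ ≤ M) (hMR : M < R) :
    ∃ z : ℝ → ℂ, ∀ k ∈ Icc (0 : ℝ) 1,
      HasDerivAt z (z k * (c + z k * (exp (-(c * k)) * g k))) k ∧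
        1 / (R + M) ≤ ‖z k‖ ∧ ‖z k‖ ≤ 1 / (R - M) := by
  have hM : 0 ≤ M := (norm_nonneg _).trans (hgM 0 ⟨le_rfl, zero_le_one⟩)
  set v : ℝ → ℂ := fun t => R - ∫ s in (0 : ℝ)..t, g s
  have hv_near : ∀ k ∈ Icc (0 : ℝ) 1, |‖v k‖ - R| ≤ M := by
    intro k hk
    calc |‖v k‖ - R| = |‖v k‖ - ‖(R : ℂ)‖| := by simp [abs_of_pos (hM.trans_lt hMR)]
      _ ≤ ‖v k - R‖ := abs_norm_sub_norm_le _ _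
      _ = ‖∫ s in (0 : ℝ)..k, g s‖ := by simp [v]
      _ ≤ M * |k - 0| := intervalIntegral.norm_integral_le_of_norm_le_const fun s hs => by
          rw [uIoc_of_le hk.1] at hs
          exact hgM s ⟨hs.1.le, hs.2.trans hk.2⟩
      _ ≤ M := by
          rw [sub_zero, abs_of_nonneg hk.1]
          exact mul_le_of_le_one_right hM hk.2
  refine ⟨fun t => exp (c * t) / v t, fun k hk => ?_⟩
  obtain ⟨hlo, hhi⟩ := abs_le.mp (hv_near k hk)
  have hnorm : ‖exp (c * k) / v k‖ = 1 / ‖v k‖ := by simp [Complex.norm_exp, hc]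
  refine ⟨hasDerivAt_cexp_mul_div ((hg.integral_hasStrictDerivAt 0 k).hasDerivAt.const_sub _)
    (norm_pos_iff.mp (by linarith)), ?_, ?_⟩ <;> rw [hnorm] <;>
    exact one_div_le_one_div_of_le (by linarith) (by linarith)

theorem exists_loop_lift {m b r : ℕ} (hbr : m * r ≤ b) {f : ℂ → ℂ} {δ K R : ℝ} (hδ : 0 < δ)
    (hδ1 : δ < 1) (hf : ContinuousOn f (sphere 0 (δ ^ m)))
    (hK : ∀ w ∈ sphere (0 : ℂ) (δ ^ m), ‖w‖ ^ r * ‖f w‖ ≤ K) (hKR : 2 * π / m * K < R) :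
    ∃ z : ℝ → ℂ, ∀ k ∈ Icc (0 : ℝ) 1,
      HasDerivAt z (2 * (π : ℂ) * I * z k * (-(b : ℂ) + (1 / (m : ℂ)) * z k * (δ : ℂ) ^ b *
        exp (2 * (π : ℂ) * I * (b : ℂ) * (k : ℂ)) *
        f ((δ : ℂ) ^ m * exp (2 * (π : ℂ) * I * (m : ℂ) * (k : ℂ))))) k ∧
      1 / (R + 2 * π / m * K) ≤ ‖z k‖ ∧ ‖z k‖ ≤ 1 / (R - 2 * π / m * K) := by
  set w : ℝ → ℂ := fun t => (δ : ℂ) ^ m * exp (2 * π * I * m * t)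
  have hw : ∀ t, w t ∈ sphere (0 : ℂ) (δ ^ m) := fun t => by
    simp [w, Complex.norm_exp, abs_of_pos hδ]
  set g : ℝ → ℂ := fun t => 2 * π * I * (1 / m) * δ ^ b * f (w t)
  have hg : Continuous g := continuous_const.mul (hf.comp_continuous (by fun_prop) hw)
  have hgK : ∀ t, ‖g t‖ ≤ 2 * π / m * K := fun t => by
    have hδf : δ ^ b * ‖f (w t)‖ ≤ K := by
      refine le_trans ?_ (hK _ (hw t))
      rw [mem_sphere_zero_iff_norm.mp (hw t), ← pow_mul]
      exact mul_le_mul_of_nonneg_right (pow_le_pow_of_le_one hδ.le hδ1.le hbr) (norm_nonneg _)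
    calc ‖g t‖ = 2 * π / m * (δ ^ b * ‖f (w t)‖) := by
          simp [g, abs_of_pos hδ, abs_of_pos pi_pos]
          ring
      _ ≤ 2 * π / m * K := mul_le_mul_of_nonneg_left hδf (by positivity)
  obtain ⟨z, hz⟩ := exists_bernoulli_solution (c := -(2 * π * I * b)) (by simp) hg
    (fun t _ => hgK t) hKR
  refine ⟨z, fun k hk => ⟨(hz k hk).1.congr_deriv ?_, (hz k hk).2⟩⟩
  simp only [g, w, neg_mul, neg_neg]
  ring

theorem eventually_pow_lt_and_div_rpow_lt {m : ℕ} (hm : 0 < m) (ε : ℝ) {η u : ℝ} (hη : 0 < η)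
    (hu : 0 < u) : ∀ᶠ δ in 𝓝[>] (0 : ℝ), δ < 1 ∧ δ ^ m < η ∧ (δ / ε) ^ ((1 : ℝ) / m) < u := by
  have h_lt_of_tendsto : ∀ φ : ℝ → ℝ, ContinuousAt φ 0 → φ 0 = 0 → ∀ v > 0,
      ∀ᶠ δ in 𝓝[>] (0 : ℝ), φ δ < v := fun φ hφ hφ0 v hv =>
    ((hφ0 ▸ hφ.tendsto).mono_left nhdsWithin_le_nhds).eventually_lt_const hv
  have hm1 : (0 : ℝ) ≤ 1 / m := by positivity
  exact (h_lt_of_tendsto id continuousAt_id rfl 1 one_pos).and <|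
    (h_lt_of_tendsto (· ^ m) (continuous_pow m).continuousAt (zero_pow hm.ne') _ hη).and <|
    h_lt_of_tendsto _ ((continuousAt_rpow_const _ _ (Or.inr hm1)).comp
      (continuousAt_id.div_const ε)) (by simp [zero_rpow, hm.ne']) _ hu

theorem lifting_small_loops_general
    (m b : ℕ) (hm : 0 < m)
    (r : ℕ) (hbr : b ≥ m * r)
    (ρ : ℝ) (hρ : 0 < ρ)
    (f : ℂ → ℂ) (hf : DifferentiableOn ℂ f (ball (0 : ℂ) ρ \ {0}))
    (F₁ : ℂ → ℂ) (hF₁ : DifferentiableOn ℂ F₁ (ball (0 : ℂ) ρ))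
    (hF₁f : ∀ z ∈ ball (0 : ℂ) ρ \ {0}, F₁ z = z ^ r * f z) :
    ∀ ε : ℝ, 0 < ε → ∃ δ₀ : ℝ, 0 < δ₀ ∧ δ₀ < ρ ^ ((1 : ℝ) / m) ∧
      ∀ δ : ℝ, 0 < δ → δ < δ₀ → ∃ z : ℝ → ℂ,
        (∀ k ∈ Icc (0:ℝ) 1, HasDerivWithinAt z
          (2 * (π : ℂ) * I * z k * (-(b : ℂ) + (1 / (m : ℂ)) * z k * (δ : ℂ) ^ b *
            Complex.exp (2 * (π : ℂ) * I * (b : ℂ) * (k : ℂ)) *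
            f ((δ : ℂ) ^ m * Complex.exp (2 * (π : ℂ) * I * (m : ℂ) * (k : ℂ)))))
          (Icc (0:ℝ) 1) k) ∧
        ∀ k ∈ Icc (0:ℝ) 1, (δ / ε) ^ ((1 : ℝ) / m) < ‖z k‖ ∧ ‖z k‖ < ε ^ ((1 : ℝ) / m) := by
  intro ε hε
  obtain ⟨K, η, hK0, hη, hK⟩ := exists_norm_pow_mul_le_of_continuousAt
    (hF₁.continuousOn.continuousAt (ball_mem_nhds 0 hρ))
    (mem_of_superset (sdiff_mem_nhdsWithin_compl (ball_mem_nhds 0 hρ) _) hF₁f)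
  have hε' : 0 < ε ^ ((1 : ℝ) / m) := rpow_pos_of_pos hε _
  set C := 2 * π / m * K
  set R := (ε ^ ((1 : ℝ) / m))⁻¹ + C + 1 with hR
  obtain ⟨δ₁, hδ₁, hsmall⟩ := mem_nhdsGT_iff_exists_Ioo_subset.mp <|
    eventually_pow_lt_and_div_rpow_lt hm ε (lt_min hη hρ) (show 0 < 1 / (R + C) by positivity)
  have hρm : 0 < ρ ^ ((1 : ℝ) / m) := rpow_pos_of_pos hρ _
  refine ⟨min δ₁ (ρ ^ ((1 : ℝ) / m) / 2), lt_min hδ₁ (half_pos hρm),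
    (min_le_right _ _).trans_lt (half_lt_self hρm), fun δ hδ hδδ₀ => ?_⟩
  obtain ⟨hδ1, hδη, hδε⟩ := hsmall ⟨hδ, hδδ₀.trans_le (min_le_left _ _)⟩
  have hsphere : sphere (0 : ℂ) (δ ^ m) ⊆ ball 0 ρ \ {0} := fun w hw => by
    rw [mem_sphere_zero_iff_norm] at hw
    exact ⟨by simpa [hw] using hδη.trans_le (min_le_right _ _),
      norm_pos_iff.mp (hw ▸ pow_pos hδ m)⟩
  obtain ⟨z, hz⟩ := exists_loop_lift hbr hδ hδ1 (hf.continuousOn.mono hsphere)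
    (fun w hw => hK w (hsphere hw).2 ((mem_sphere_zero_iff_norm.mp hw).trans_lt
      (hδη.trans_le (min_le_left _ _)))) (show C < R by linarith [inv_pos.mpr hε'])
  refine ⟨z, fun k hk => (hz k hk).1.hasDerivWithinAt, fun k hk =>
    ⟨hδε.trans_le (hz k hk).2.1, (hz k hk).2.2.trans_lt ?_⟩⟩
  calc 1 / (R - C) = 1 / ((ε ^ ((1 : ℝ) / m))⁻¹ + 1) := by rw [hR]; ring_nf
    _ < 1 / (ε ^ ((1 : ℝ) / m))⁻¹ := by gcongr; linarith
    _ = ε ^ ((1 : ℝ) / m) := by rw [one_div, inv_inv]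

/-- **Lifting small loops to leaves of `ℱ_Y` (final lemma of Section 3).**
Let `a·m − b·n = 1`, `b ≥ m·r`, and let `f` be holomorphic on `D(0,ρ) \ {0}` with
`z ↦ z^r·f(z)` extending holomorphically to `D(0,ρ)`.  Then for every `ε > 0` there is
`δ₀ ∈ (0, ρ^{1/m})` such that for every `δ ∈ (0, δ₀)` the loop `w(k) = δ·e^{2πik}` in the
leaf space of `X` lifts to a solution `z : [0,1] → ℂ` of
`z' = 2πi·z·(−b + (1/m)·z·δᵇ·e^{2πibk}·f(δᵐ·e^{2πimk}))`
satisfying `(δ/ε)^{1/m} < |z(k)| < ε^{1/m}` for all `k ∈ [0,1]`. -/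
theorem lifting_small_loops
    (m n a b : ℕ) (hm : 0 < m) (hn : 0 < n) (ha : 0 < a) (hb : 0 < b)
    (hab : (a * m : ℤ) - (b * n : ℤ) = 1)
    (r : ℕ) (hbr : b ≥ m * r)
    (ρ : ℝ) (hρ : 0 < ρ)
    (f : ℂ → ℂ) (hf : DifferentiableOn ℂ f (ball (0 : ℂ) ρ \ {0}))
    (F₁ : ℂ → ℂ) (hF₁ : DifferentiableOn ℂ F₁ (ball (0 : ℂ) ρ))
    (hF₁f : ∀ z ∈ ball (0 : ℂ) ρ \ {0}, F₁ z = z ^ r * f z) :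
    ∀ ε : ℝ, 0 < ε → ∃ δ₀ : ℝ, 0 < δ₀ ∧ δ₀ < ρ ^ ((1 : ℝ) / m) ∧
      ∀ δ : ℝ, 0 < δ → δ < δ₀ → ∃ z : ℝ → ℂ,
        (∀ k ∈ Icc (0:ℝ) 1, HasDerivWithinAt z
          (2 * (π : ℂ) * I * z k * (-(b : ℂ) + (1 / (m : ℂ)) * z k * (δ : ℂ) ^ b *
            Complex.exp (2 * (π : ℂ) * I * (b : ℂ) * (k : ℂ)) *
            f ((δ : ℂ) ^ m * Complex.exp (2 * (π : ℂ) * I * (m : ℂ) * (k : ℂ)))))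
          (Icc (0:ℝ) 1) k) ∧
        ∀ k ∈ Icc (0:ℝ) 1, (δ / ε) ^ ((1 : ℝ) / m) < ‖z k‖ ∧ ‖z k‖ < ε ^ ((1 : ℝ) / m) :=
  lifting_small_loops_general m b hm r hbr ρ hρ f hf F₁ hF₁ hF₁f
end
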